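/- arXiv:1710.09467 — 7 statements merged into one kernel-verified Lean document; each statement's English description precedes it below -/
import Mathlib

section
/- For every integer n ≥ 3, the local dimension of the standard example S_n is exactly 3. -/
/-- A linear extension of the partial order on `α`: a linear order relation
containing the partial order. -/
def IsLinearExtension {α : Type*} [PartialOrder α] (r : α → α → Prop) : Prop :=
  IsLinearOrder α r ∧ ∀ x y : α, x ≤ y → r x y

/-- `P` has a realizer of size `d`: `d` linear extensions whose intersection is the order. -/
def HasRealizer (α : Type*) [PartialOrder α] (d : ℕ) : Prop :=
  ∃ L : Fin d → (α → α → Prop),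
    (∀ i, IsLinearExtension (L i)) ∧ (∀ x y : α, (∀ i, L i x y) → x ≤ y)

/-- The Dushnik–Miller dimension of a poset. -/
noncomputable def dimDM (α : Type*) [PartialOrder α] : ℕ :=
  sInf {d | 0 < d ∧ HasRealizer α d}

/-- A Boolean realizer of size `d`: `d` linear orders on the ground set together with a
"decoder" `τ` determining the order from the query vector. -/
def HasBooleanRealizer (α : Type*) [PartialOrder α] (d : ℕ) : Prop :=
  ∃ (B : Fin d → (α → α → Prop)) (τ : (Fin d → Prop) → Prop),
    (∀ i, IsLinearOrder α (B i)) ∧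
    ∀ x y : α, x ≠ y → (x < y ↔ τ (fun i => B i x y))

/-- The Boolean dimension of a poset. -/
noncomputable def bdim (α : Type*) [PartialOrder α] : ℕ :=
  sInf {d | 0 < d ∧ HasBooleanRealizer α d}

/-- A partial linear extension of the poset `α`: a linear extension of a subposet. -/
structure PLE (α : Type*) [PartialOrder α] where
  S : Set α
  r : α → α → Prop
  mem_of_rel : ∀ x y, r x y → x ∈ S ∧ y ∈ S
  refl : ∀ x ∈ S, r x x
  antisymm' : ∀ x y, r x y → r y x → x = y
  trans' : ∀ x y z, r x y → r y z → r x z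
  total : ∀ x ∈ S, ∀ y ∈ S, r x y ∨ r y x
  extends_le : ∀ x ∈ S, ∀ y ∈ S, x ≤ y → r x y

/-- A family of ple's is a local realizer when every comparability appears in some member
and every incomparable pair is reversed in some member. -/
def IsLocalRealizer {α : Type*} [PartialOrder α] {t : ℕ} (L : Fin t → PLE α) : Prop :=
  (∀ x y : α, x ≤ y → ∃ i, x ∈ (L i).S ∧ y ∈ (L i).S) ∧
  (∀ x y : α, ¬ x ≤ y → ¬ y ≤ x → ∃ i, (L i).r y x)

/-- The local dimension of a poset. -/
noncomputable def ldim (α : Type*) [PartialOrder α] : ℕ :=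
  sInf {k | 0 < k ∧ ∃ (t : ℕ) (L : Fin t → PLE α),
    IsLocalRealizer L ∧ ∀ u : α, ({i | u ∈ (L i).S} : Set (Fin t)).ncard ≤ k}

/-- The standard example `S_n`: `(false, i)` is the minimal element `a_i`,
`(true, j)` is the maximal element `b_j`, and `a_i < b_j` iff `i ≠ j`. -/
def StdEx (n : ℕ) := Bool × Fin n

instance (n : ℕ) : PartialOrder (StdEx n) where
  le x y := x = y ∨ (x.1 = false ∧ y.1 = true ∧ x.2 ≠ y.2)
  le_refl x := Or.inl rfl
  le_trans := by
    rintro x y z (rfl | ⟨hx, hy, hxy⟩) h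
    · exact h
    · rcases h with rfl | ⟨hy', hz, hyz⟩
      · exact Or.inr ⟨hx, hy, hxy⟩
      · rw [hy] at hy'; exact absurd hy' (by simp)
  le_antisymm := by
    rintro x y (rfl | ⟨hx, hy, _⟩) h
    · rfl
    · rcases h with rfl | ⟨hy', hx', _⟩
      · rfl
      · rw [hy] at hy'; exact absurd hy' (by simp)

-- auxiliary development, to be inserted above the theorem
namespace StdExAux

variable {n : ℕ}

def A (n : ℕ) (i : Fin n) : StdEx n := (false, i)
def B (n : ℕ) (i : Fin n) : StdEx n := (true, i)

lemma A_ne_B (i j : Fin n) : A n i ≠ B n j := by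
  intro h; injection h with h1 _; cases h1

lemma B_ne_A (i j : Fin n) : B n i ≠ A n j := by
  intro h; injection h with h1 _; cases h1

lemma A_inj {i j : Fin n} (h : A n i = A n j) : i = j := by
  injection h

lemma B_inj {i j : Fin n} (h : B n i = B n j) : i = j := by
  injection h

lemma le_iff (x y : StdEx n) : x ≤ y ↔ x = y ∨ (x.1 = false ∧ y.1 = true ∧ x.2 ≠ y.2) :=
  Iff.rfl

/-- the tiny ple reversing the pair `(a_i, b_i)`: `b_i` below `a_i`. -/
def pleT (n : ℕ) (i : Fin n) : PLE (StdEx n) where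
  S := {B n i, A n i}
  r x y := (x = B n i ∧ (y = B n i ∨ y = A n i)) ∨ (x = A n i ∧ y = A n i)
  mem_of_rel := by
    rintro x y (⟨rfl, rfl | rfl⟩ | ⟨rfl, rfl⟩) <;> simp
  refl := by
    intro x hx
    rcases hx with rfl | rfl
    · exact Or.inl ⟨rfl, Or.inl rfl⟩
    · exact Or.inr ⟨rfl, rfl⟩
  antisymm' := by
    rintro x y (⟨rfl, rfl | rfl⟩ | ⟨rfl, rfl⟩) h
    · rfl
    · rcases h with ⟨h1, _⟩ | ⟨_, h2⟩
      · exact absurd h1 (A_ne_B i i)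
      · exact absurd h2 (B_ne_A i i)
    · rfl
  trans' := by
    rintro x y z (⟨rfl, rfl | rfl⟩ | ⟨rfl, rfl⟩) h
    · exact h
    · rcases h with ⟨h1, _⟩ | ⟨_, rfl⟩
      · exact absurd h1 (A_ne_B i i)
      · exact Or.inl ⟨rfl, Or.inr rfl⟩
    · rcases h with ⟨h1, _⟩ | ⟨_, rfl⟩
      · exact absurd h1 (A_ne_B i i)
      · exact Or.inr ⟨rfl, rfl⟩
  total := by
    intro x hx y hy
    rcases hx with rfl | rfl <;> rcases hy with rfl | rfl
    · exact Or.inl (Or.inl ⟨rfl, Or.inl rfl⟩)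
    · exact Or.inl (Or.inl ⟨rfl, Or.inr rfl⟩)
    · exact Or.inr (Or.inl ⟨rfl, Or.inr rfl⟩)
    · exact Or.inl (Or.inr ⟨rfl, rfl⟩)
  extends_le := by
    intro x hx y hy hxy
    rcases hxy with rfl | ⟨h1, h2, h3⟩
    · rcases hx with rfl | rfl
      · exact Or.inl ⟨rfl, Or.inl rfl⟩
      · exact Or.inr ⟨rfl, rfl⟩
    · rcases hx with rfl | rfl <;> rcases hy with rfl | rfl <;> simp_all [A, B]

/-- a full linear extension; `flip` reverses the internal order on the levels. -/
def pleM (n : ℕ) (flip : Bool) : PLE (StdEx n) where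
  S := Set.univ
  r x y := (x.1 = false ∧ y.1 = true) ∨ (x.1 = y.1 ∧ (cond flip (y.2 ≤ x.2) (x.2 ≤ y.2)))
  mem_of_rel := by intro x y _; exact ⟨trivial, trivial⟩
  refl := by intro x _; exact Or.inr ⟨rfl, by cases flip <;> simp⟩
  antisymm' := by
    intro x y h h'
    obtain ⟨xb, xi⟩ := x; obtain ⟨yb, yi⟩ := y
    rcases h with ⟨h1, h2⟩ | ⟨h1, h2⟩ <;> rcases h' with ⟨h3, h4⟩ | ⟨h3, h4⟩ <;>
      simp only at h1 h2 h3 h4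
    · rw [h2] at h3; exact absurd h3 (by simp)
    · rw [h3, h1] at h2; exact absurd h2 (by simp)
    · rw [h4, h3] at h1; exact absurd h1 (by simp)
    · subst h1
      cases flip <;> simp only [Bool.cond_false, Bool.cond_true] at h2 h4
      · rw [le_antisymm h2 h4]
      · rw [le_antisymm h4 h2]
  trans' := by
    rintro x y z (⟨h1, h2⟩ | ⟨h1, h2⟩) (⟨h3, h4⟩ | ⟨h3, h4⟩)
    · rw [h2] at h3; exact absurd h3 (by simp)
    · exact Or.inl ⟨h1, h3 ▸ h2⟩
    · exact Or.inl ⟨h1 ▸ h3, h4⟩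
    · refine Or.inr ⟨h1.trans h3, ?_⟩
      cases flip <;> simp only [Bool.cond_false, Bool.cond_true] at h2 h4 ⊢
      · exact le_trans h2 h4
      · exact le_trans h4 h2
  total := by
    intro x _ y _
    by_cases h : x.1 = y.1
    · rcases le_total x.2 y.2 with hle | hle
      · cases flip
        · exact Or.inl (Or.inr ⟨h, hle⟩)
        · exact Or.inr (Or.inr ⟨h.symm, hle⟩)
      · cases flip
        · exact Or.inr (Or.inr ⟨h.symm, hle⟩)
        · exact Or.inl (Or.inr ⟨h, hle⟩)
    · rcases Bool.eq_false_or_eq_true x.1 with hx | hx <;>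
        rcases Bool.eq_false_or_eq_true y.1 with hy | hy
      · exact absurd (hx.trans hy.symm) h
      · exact Or.inr (Or.inl ⟨hy, hx⟩)
      · exact Or.inl (Or.inl ⟨hx, hy⟩)
      · exact absurd (hx.trans hy.symm) h
  extends_le := by
    intro x _ y _ hxy
    rcases hxy with rfl | ⟨h1, h2, _⟩
    · exact Or.inr ⟨rfl, by cases flip <;> simp⟩
    · exact Or.inl ⟨h1, h2⟩

lemma ncard_triple_le {β : Type*} (a b c : β) : ({a, b, c} : Set β).ncard ≤ 3 := by
  have h2 : ({b, c} : Set β).ncard ≤ 2 := by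
    refine le_trans (Set.ncard_insert_le _ _) ?_
    simp [Set.ncard_singleton]
  have h3 : ({a, b, c} : Set β).ncard ≤ ({b, c} : Set β).ncard + 1 := Set.ncard_insert_le _ _
  omega

/-- the family realizing `ldim ≤ 3` -/
def famL (n : ℕ) : Fin (n + 2) → PLE (StdEx n) := fun j =>
  if h : (j : ℕ) < n then pleT n ⟨j, h⟩
  else if (j : ℕ) = n then pleM n false else pleM n true

lemma famL_lt {j : Fin (n + 2)} (h : (j : ℕ) < n) : famL n j = pleT n ⟨j, h⟩ := dif_pos h

lemma famL_n (hn : 0 < n + 2) : famL n ⟨n, by omega⟩ = pleM n false := by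
  simp [famL]

lemma famL_n1 (hn : 0 < n + 2) : famL n ⟨n + 1, by omega⟩ = pleM n true := by
  simp [famL]

lemma upper (n : ℕ) :
    0 < 3 ∧ ∃ (t : ℕ) (L : Fin t → PLE (StdEx n)),
      IsLocalRealizer L ∧ ∀ u : StdEx n, ({i | u ∈ (L i).S} : Set (Fin t)).ncard ≤ 3 := by
  refine ⟨by norm_num, n + 2, famL n, ⟨?_, ?_⟩, ?_⟩
  · intro x y _
    refine ⟨⟨n, by omega⟩, ?_, ?_⟩ <;> rw [famL_n (by omega)] <;> exact Set.mem_univ _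
  · intro x y hxy hyx
    obtain ⟨xb, xi⟩ := x; obtain ⟨yb, yi⟩ := y
    cases xb <;> cases yb
    · -- both minimal
      rcases le_total yi xi with h | h
      · exact ⟨⟨n, by omega⟩, by rw [famL_n (by omega)]; exact Or.inr ⟨rfl, h⟩⟩
      · exact ⟨⟨n + 1, by omega⟩, by rw [famL_n1 (by omega)]; exact Or.inr ⟨rfl, h⟩⟩
    · -- x minimal, y maximal : must have same index, use pleT
      have hix : xi = yi := by
        by_contra hne
        exact hxy (Or.inr ⟨rfl, rfl, hne⟩)
      subst hix
      refine ⟨⟨xi.val, by omega⟩, ?_⟩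
      have h : ((⟨xi.val, by omega⟩ : Fin (n + 2)) : ℕ) < n := xi.isLt
      rw [famL_lt h]
      exact Or.inl ⟨rfl, Or.inr rfl⟩
    · -- x maximal, y minimal : same index, use pleM
      have hix : yi = xi := by
        by_contra hne
        exact hyx (Or.inr ⟨rfl, rfl, hne⟩)
      subst hix
      exact ⟨⟨n, by omega⟩, by rw [famL_n (by omega)]; exact Or.inl ⟨rfl, rfl⟩⟩
    · -- both maximal
      rcases le_total yi xi with h | h
      · exact ⟨⟨n, by omega⟩, by rw [famL_n (by omega)]; exact Or.inr ⟨rfl, h⟩⟩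
      · exact ⟨⟨n + 1, by omega⟩, by rw [famL_n1 (by omega)]; exact Or.inr ⟨rfl, h⟩⟩
  · intro u
    have hsub : {j : Fin (n + 2) | u ∈ (famL n j).S} ⊆
        {⟨u.2.val, by omega⟩, ⟨n, by omega⟩, ⟨n + 1, by omega⟩} := by
      intro j hj
      simp only [Set.mem_insert_iff, Set.mem_singleton_iff]
      by_cases h : (j : ℕ) < n
      · left
        rw [Set.mem_setOf_eq, famL_lt h] at hj
        have hu2 : u.2 = ⟨(j : ℕ), h⟩ := by
          rcases hj with rfl | rfl <;> rfl
        apply Fin.ext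
        exact (congrArg Fin.val hu2).symm
      · have h' : (j : ℕ) = n ∨ (j : ℕ) = n + 1 := by
          have := j.isLt; omega
        rcases h' with h' | h'
        · exact Or.inr (Or.inl (Fin.ext h'))
        · exact Or.inr (Or.inr (Fin.ext h'))
    exact le_trans (Set.ncard_le_ncard hsub (Set.toFinite _)) (ncard_triple_le _ _ _)

lemma lower (n : ℕ) (hn : 3 ≤ n) {k : ℕ} {t : ℕ} {L : Fin t → PLE (StdEx n)}
    (hlr : IsLocalRealizer L)
    (hmu : ∀ u : StdEx n, ({i | u ∈ (L i).S} : Set (Fin t)).ncard ≤ k) :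
    3 ≤ k := by
  by_contra hlt
  push_neg at hlt
  have hk2 : ∀ u : StdEx n, ({i | u ∈ (L i).S} : Set (Fin t)).ncard ≤ 2 :=
    fun u => le_trans (hmu u) (by omega)
  obtain ⟨hcomp, hrev⟩ := hlr
  have hAB : ∀ i : Fin n, ¬ A n i ≤ B n i := by
    intro i h
    rcases h with h | ⟨_, _, h3⟩
    · exact A_ne_B i i h
    · exact h3 rfl
  have hBA : ∀ i : Fin n, ¬ B n i ≤ A n i := by
    intro i h
    rcases h with h | ⟨h1, _, _⟩
    · exact B_ne_A i i h
    · exact Bool.noConfusion h1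
  have hAA : ∀ i j : Fin n, i ≠ j → ¬ A n i ≤ A n j := by
    intro i j hij h
    rcases h with h | ⟨_, h2, _⟩
    · exact hij (A_inj h)
    · exact Bool.noConfusion h2
  have hALB : ∀ i j : Fin n, i ≠ j → A n i ≤ B n j := fun i j hij =>
    Or.inr ⟨rfl, rfl, fun h => hij h⟩
  have hr : ∀ i : Fin n, ∃ j, (L j).r (B n i) (A n i) := fun i => hrev _ _ (hAB i) (hBA i)
  choose rIdx hrIdx using hr
  have hrInj : ∀ i j : Fin n, i ≠ j → rIdx i ≠ rIdx j := by
    intro i j hij heq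
    have h1 := hrIdx i
    have h2 := hrIdx j
    rw [heq] at h1
    have hm1 := (L (rIdx j)).mem_of_rel _ _ h1
    have hm2 := (L (rIdx j)).mem_of_rel _ _ h2
    have hij' : (L (rIdx j)).r (A n i) (B n j) :=
      (L (rIdx j)).extends_le _ hm1.2 _ hm2.1 (hALB i j hij)
    have hji' : (L (rIdx j)).r (A n j) (B n i) :=
      (L (rIdx j)).extends_le _ hm2.2 _ hm1.1 (hALB j i (Ne.symm hij))
    have hbb : (L (rIdx j)).r (B n i) (B n j) := (L (rIdx j)).trans' _ _ _ h1 hij'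
    have hbb' : (L (rIdx j)).r (B n j) (B n i) := (L (rIdx j)).trans' _ _ _ h2 hji'
    exact hij (B_inj ((L (rIdx j)).antisymm' _ _ hbb hbb'))
  have hMA : ∀ i : Fin n, rIdx i ∈ {m : Fin t | A n i ∈ (L m).S} :=
    fun i => ((L (rIdx i)).mem_of_rel _ _ (hrIdx i)).2
  have hpair : ∀ i j : Fin n, i ≠ j →
      {m : Fin t | A n i ∈ (L m).S} = {m : Fin t | A n j ∈ (L m).S} := by
    intro i j hij
    obtain ⟨p, hp⟩ := hrev (A n i) (A n j) (hAA i j hij) (hAA j i (Ne.symm hij))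
    obtain ⟨q, hq⟩ := hrev (A n j) (A n i) (hAA j i (Ne.symm hij)) (hAA i j hij)
    have hpq : p ≠ q := by
      rintro rfl
      exact hij (A_inj ((L p).antisymm' _ _ hq hp))
    have hsubi : ({p, q} : Set (Fin t)) ⊆ {m : Fin t | A n i ∈ (L m).S} := by
      intro m hm
      simp only [Set.mem_insert_iff, Set.mem_singleton_iff] at hm
      rcases hm with rfl | rfl
      · exact ((L m).mem_of_rel _ _ hp).2
      · exact ((L m).mem_of_rel _ _ hq).1
    have hsubj : ({p, q} : Set (Fin t)) ⊆ {m : Fin t | A n j ∈ (L m).S} := by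
      intro m hm
      simp only [Set.mem_insert_iff, Set.mem_singleton_iff] at hm
      rcases hm with rfl | rfl
      · exact ((L m).mem_of_rel _ _ hp).1
      · exact ((L m).mem_of_rel _ _ hq).2
    have hpqcard : ({p, q} : Set (Fin t)).ncard = 2 := Set.ncard_pair hpq
    have e1 : ({p, q} : Set (Fin t)) = {m : Fin t | A n i ∈ (L m).S} :=
      Set.eq_of_subset_of_ncard_le hsubi (by rw [hpqcard]; exact hk2 _) (Set.toFinite _)
    have e2 : ({p, q} : Set (Fin t)) = {m : Fin t | A n j ∈ (L m).S} :=
      Set.eq_of_subset_of_ncard_le hsubj (by rw [hpqcard]; exact hk2 _) (Set.toFinite _)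
    rw [← e1, e2]
  set i0 : Fin n := ⟨0, by omega⟩ with hi0
  set i1 : Fin n := ⟨1, by omega⟩ with hi1
  set i2 : Fin n := ⟨2, by omega⟩ with hi2
  have h01 : i0 ≠ i1 := Fin.ne_of_val_ne (by norm_num)
  have h02 : i0 ≠ i2 := Fin.ne_of_val_ne (by norm_num)
  have h12 : i1 ≠ i2 := Fin.ne_of_val_ne (by norm_num)
  have hsub3 : ({rIdx i0, rIdx i1, rIdx i2} : Set (Fin t)) ⊆ {m : Fin t | A n i0 ∈ (L m).S} := by
    intro m hm
    simp only [Set.mem_insert_iff, Set.mem_singleton_iff] at hm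
    rcases hm with rfl | rfl | rfl
    · exact hMA i0
    · rw [hpair i0 i1 h01]; exact hMA i1
    · rw [hpair i0 i2 h02]; exact hMA i2
  have hnm : rIdx i0 ∉ ({rIdx i1, rIdx i2} : Set (Fin t)) := by
    simp only [Set.mem_insert_iff, Set.mem_singleton_iff]
    push_neg
    exact ⟨hrInj i0 i1 h01, hrInj i0 i2 h02⟩
  have hc3 : ({rIdx i0, rIdx i1, rIdx i2} : Set (Fin t)).ncard = 3 := by
    rw [Set.ncard_insert_of_notMem hnm (Set.toFinite _), Set.ncard_pair (hrInj i1 i2 h12)]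
  have hle := Set.ncard_le_ncard hsub3 (Set.toFinite _)
  rw [hc3] at hle
  have := hk2 (A n i0)
  omega

end StdExAux

/-- For every integer `n ≥ 3`, the local dimension of the standard example `S_n` is `3`. -/
theorem stdEx_ldim (n : ℕ) (hn : 3 ≤ n) : ldim (StdEx n) = 3 := by
  have h3 : 3 ∈ {k | 0 < k ∧ ∃ (t : ℕ) (L : Fin t → PLE (StdEx n)),
      IsLocalRealizer L ∧ ∀ u : StdEx n, ({i | u ∈ (L i).S} : Set (Fin t)).ncard ≤ k} :=
    StdExAux.upper n
  have hmem := Nat.sInf_mem (s := {k | 0 < k ∧ ∃ (t : ℕ) (L : Fin t → PLE (StdEx n)),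
      IsLocalRealizer L ∧ ∀ u : StdEx n, ({i | u ∈ (L i).S} : Set (Fin t)).ncard ≤ k}) ⟨3, h3⟩
  obtain ⟨hpos, t, L, hlr, hmu⟩ := hmem
  exact le_antisymm (Nat.sInf_le h3) (StdExAux.lower n hn hlr hmu)
end

section
/- For every integer n ≥ 4, the Boolean dimension of the standard example S_n is exactly 4. -/
namespace StdExAux

lemma stdEx_le_iff {n : ℕ} (x y : StdEx n) :
    x ≤ y ↔ x = y ∨ (x.1 = false ∧ y.1 = true ∧ x.2 ≠ y.2) := Iff.rfl

lemma stdEx_lt_iff {n : ℕ} (x y : StdEx n) :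
    x < y ↔ x.1 = false ∧ y.1 = true ∧ x.2 ≠ y.2 := by
  rw [lt_iff_le_and_ne]
  constructor
  · rintro ⟨h, hne⟩
    rcases h with h | h
    · exact absurd h hne
    · exact h
  · rintro ⟨h1, h2, h3⟩
    refine ⟨Or.inr ⟨h1, h2, h3⟩, ?_⟩
    intro h; rw [h] at h1; rw [h1] at h2; exact Bool.false_ne_true h2

/-- ranking functions for the four linear orders -/
def f4 (n : ℕ) : Fin 4 → StdEx n → ℕ
  | 0, x => if x.1 then n + x.2.1 else x.2.1
  | 1, x => if x.1 then n + (n - 1 - x.2.1) else n - 1 - x.2.1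
  | 2, x => if x.1 then 2 * x.2.1 + 1 else 2 * x.2.1
  | 3, x => if x.1 then 2 * (n - 1 - x.2.1) + 1 else 2 * (n - 1 - x.2.1)

lemma f4_inj (n : ℕ) (k : Fin 4) : Function.Injective (f4 n k) := by
  rintro ⟨bx, i, hi⟩ ⟨by', j, hj⟩ h
  have key : bx = by' ∧ i = j := by
    fin_cases k <;> cases bx <;> cases by' <;> simp [f4] at h <;>
      constructor <;> first | rfl | omega
  simp only [key.1, key.2]; rfl

theorem stdEx_hbr4 (n : ℕ) : HasBooleanRealizer (StdEx n) 4 := by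
  refine ⟨fun k x y => f4 n k x ≤ f4 n k y,
    fun v => v 0 ∧ v 1 ∧ ¬(v 2 ∧ v 3), fun k => ?_, ?_⟩
  · exact @IsLinearOrder.mk _ _
      (@IsPartialOrder.mk _ _
        (@IsPreorder.mk _ _ ⟨fun x => le_refl _⟩ ⟨fun x y z => le_trans⟩)
        ⟨fun x y h1 h2 => f4_inj n k (le_antisymm h1 h2)⟩)
      ⟨fun x y => le_total _ _⟩
  · rintro ⟨bx, i, hi⟩ ⟨by', j, hj⟩ hne
    refine (stdEx_lt_iff (n := n) _ _).trans ?_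
    show _ ↔ (f4 n 0 _ ≤ f4 n 0 _ ∧ f4 n 1 _ ≤ f4 n 1 _ ∧
      ¬(f4 n 2 _ ≤ f4 n 2 _ ∧ f4 n 3 _ ≤ f4 n 3 _))
    have hne' : bx = by' → i ≠ j := by
      intro hb hij; exact hne (by subst hb; subst hij; rfl)
    cases bx <;> cases by' <;>
      [ (have h := hne' rfl; simp [f4, Fin.ext_iff]; omega);
        (simp [f4, Fin.ext_iff]; omega);
        (simp [f4, Fin.ext_iff]; omega);
        (have h := hne' rfl; simp [f4, Fin.ext_iff]; omega)]

end StdExAux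

namespace StdExAux

lemma tri_bool : ∀ p1 p2 q1 q2 r1 r2 E : Bool, (p1 = r1 → q1 = r1) → (p2 = r2 → q2 = r2) →
    xor p1 p2 = !E → xor q1 q2 = E → xor r1 r2 = E → q1 = r1 := by decide

lemma par_bool : ∀ v1 v2 s1 s2 : Bool, ¬(v1 = s1 ∧ v2 = s2) → ¬(v1 = !s1 ∧ v2 = !s2) →
    xor v1 v2 = !(xor s1 s2) := by decide

lemma fin4_choice : ∀ p q r : Fin 4, ∃ z : Fin 4, z ≠ p ∧ z ≠ q ∧ z ≠ r := by decide

lemma fin3_cover : ∀ k : Fin 3, k = 0 ∨ k = 1 ∨ k = 2 := by decide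

/-- complement of a bit-vector -/
def cpl (v : Fin 3 → Bool) : Fin 3 → Bool := fun k => !(v k)

lemma cpl_cpl (v : Fin 3 → Bool) : cpl (cpl v) = v := by
  funext k; simp [cpl]

lemma ne_cpl_self (v : Fin 3 → Bool) : v ≠ cpl v := by
  intro h
  have h0 := congrFun h 0
  simp only [cpl] at h0
  revert h0; cases v 0 <;> simp

lemma cpl_inj {v w : Fin 3 → Bool} (h : cpl v = cpl w) : v = w := by
  rw [← cpl_cpl v, h, cpl_cpl]

lemma ne_cpl_symm {v w : Fin 3 → Bool} (h : v ≠ cpl w) : w ≠ cpl v := by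
  intro h2; rw [h2, cpl_cpl] at h; exact h rfl

lemma cpl_ne {v w : Fin 3 → Bool} (h : v ≠ w) : cpl v ≠ cpl w := fun h2 => h (cpl_inj h2)

lemma eight_vectors (s t r v w : Fin 3 → Bool)
    (hst : s ≠ t) (hstc : s ≠ cpl t) (hsr : s ≠ r) (hsrc : s ≠ cpl r)
    (htr : t ≠ r) (htrc : t ≠ cpl r)
    (hvs : v ≠ s) (hvsc : v ≠ cpl s) (hvt : v ≠ t) (hvtc : v ≠ cpl t)
    (hvr : v ≠ r) (hvrc : v ≠ cpl r)
    (hws : w ≠ s) (hwsc : w ≠ cpl s) (hwt : w ≠ t) (hwtc : w ≠ cpl t)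
    (hwr : w ≠ r) (hwrc : w ≠ cpl r) :
    v = w ∨ v = cpl w := by
  by_contra hc
  push_neg at hc
  obtain ⟨hvw, hvwc⟩ := hc
  have hnodup : ([s, t, r, v, w, cpl s, cpl t, cpl r, cpl v, cpl w] :
      List (Fin 3 → Bool)).Nodup := by
    simp only [List.nodup_cons, List.mem_cons, List.not_mem_nil, or_false,
      not_or, List.nodup_nil, and_true, List.mem_singleton]
    refine ⟨⟨hst, hsr, hvs.symm, hws.symm, ne_cpl_self s, hstc, hsrc,
        ne_cpl_symm hvsc, ne_cpl_symm hwsc⟩,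
      ⟨htr, hvt.symm, hwt.symm, ne_cpl_symm hstc, ne_cpl_self t, htrc,
        ne_cpl_symm hvtc, ne_cpl_symm hwtc⟩,
      ⟨hvr.symm, hwr.symm, ne_cpl_symm hsrc, ne_cpl_symm htrc, ne_cpl_self r,
        ne_cpl_symm hvrc, ne_cpl_symm hwrc⟩,
      ⟨hvw, hvsc, hvtc, hvrc, ne_cpl_self v, hvwc⟩,
      ⟨hwsc, hwtc, hwrc, ne_cpl_symm hvwc, ne_cpl_self w⟩,
      ⟨cpl_ne hst, cpl_ne hsr, cpl_ne hvs.symm, cpl_ne hws.symm⟩,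
      ⟨cpl_ne htr, cpl_ne hvt.symm, cpl_ne hwt.symm⟩,
      ⟨cpl_ne hvr.symm, cpl_ne hwr.symm⟩,
      ⟨cpl_ne hvw, not_false⟩⟩
  have hlen := hnodup.length_le_card
  simp at hlen

end StdExAux

namespace StdExAux

set_option maxHeartbeats 3200000 in
theorem no_hbr3 (n : ℕ) (hn : 4 ≤ n) : ¬ HasBooleanRealizer (StdEx n) 3 := by
  rintro ⟨B, τ, hlin, hiff⟩
  classical
  -- the query vector of a pair, and the decoder on bit-vectors
  let σ : StdEx n → StdEx n → Fin 3 → Bool := fun x y k => decide (B k x y)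
  let T' : (Fin 3 → Bool) → Prop := fun v => τ (fun k => v k = true)
  have hστ : ∀ x y : StdEx n, x ≠ y → (x < y ↔ T' (σ x y)) := by
    intro x y h
    rw [hiff x y h]
    have he : (fun k : Fin 3 => B k x y) = (fun k => σ x y k = true) := by
      funext k; simp [σ]
    show _ ↔ τ (fun k => σ x y k = true)
    rw [← he]
  -- linear order facts
  have htot : ∀ (k : Fin 3) (x y : StdEx n), B k x y ∨ B k y x := fun k x y => (hlin k).total x y
  have htrans : ∀ (k : Fin 3) (x y z : StdEx n), B k x y → B k y z → B k x z :=
    fun k x y z hxy hyz => (hlin k).trans _ _ _ hxy hyz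
  have hanti : ∀ (k : Fin 3) (x y : StdEx n), B k x y → B k y x → x = y :=
    fun k x y h1 h2 => (hlin k).antisymm _ _ h1 h2
  -- sigma facts
  have hσt : ∀ (x y : StdEx n) (k : Fin 3), σ x y k = true ↔ B k x y := by
    intro x y k; simp [σ]
  have hσf : ∀ (x y : StdEx n) (k : Fin 3), σ x y k = false → B k y x := by
    intro x y k h
    refine (htot k x y).resolve_left ?_
    intro h2
    rw [(hσt x y k).mpr h2] at h
    exact Bool.noConfusion h
  have hσf' : ∀ (x y : StdEx n) (k : Fin 3), x ≠ y → B k y x → σ x y k = false := by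
    intro x y k hne h
    cases hv : σ x y k
    · rfl
    · exact absurd (hanti k _ _ ((hσt x y k).mp hv) h) hne
  have hcompl : ∀ (x y : StdEx n), x ≠ y → σ y x = cpl (σ x y) := by
    intro x y hne
    funext k
    cases hv : σ x y k
    · have := hσf x y k hv
      simp only [cpl, hv, Bool.not_false]
      exact (hσt y x k).mpr this
    · have := (hσt x y k).mp hv
      simp only [cpl, hv, Bool.not_true]
      exact hσf' y x k (Ne.symm hne) this
  -- the chain (transitivity) fact, coordinatewise
  have hchain : ∀ (x y z : StdEx n) (k : Fin 3), x ≠ z →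
      σ x y k = σ y z k → σ x z k = σ y z k := by
    intro x y z k hxz h
    cases hv : σ y z k
    · rw [hv] at h
      exact hσf' x z k hxz (htrans k _ _ _ (hσf y z k hv) (hσf x y k h))
    · rw [hv] at h
      exact (hσt x z k).mpr (htrans k _ _ _ ((hσt x y k).mp h) ((hσt y z k).mp hv))
  -- the four minimal and maximal elements
  have hm4 : ∀ m : Fin 4, (m : ℕ) < n := fun m => lt_of_lt_of_le m.2 hn
  let a : Fin 4 → StdEx n := fun m => (false, ⟨m, hm4 m⟩)
  let b : Fin 4 → StdEx n := fun m => (true, ⟨m, hm4 m⟩)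
  have hab : ∀ m m', a m ≠ b m' := by
    intro m m' h
    exact Bool.false_ne_true (congrArg Prod.fst h)
  have hba : ∀ m m', b m ≠ a m' := fun m m' h => hab m' m h.symm
  have haa : ∀ m m', m ≠ m' → a m ≠ a m' := by
    intro m m' hne h
    exact hne (Fin.ext (congrArg (fun p : StdEx n => (p.2 : Fin n).val) h))
  have hbb : ∀ m m', m ≠ m' → b m ≠ b m' := by
    intro m m' hne h
    exact hne (Fin.ext (congrArg (fun p : StdEx n => (p.2 : Fin n).val) h))
  -- order relations between them
  have hltab : ∀ m m', m ≠ m' → a m < b m' := by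
    intro m m' hne
    rw [stdEx_lt_iff]
    refine ⟨rfl, rfl, fun h => hne ?_⟩
    have h2 := congrArg Fin.val h
    exact Fin.ext h2
  have hnab : ∀ m, ¬ a m < b m := by
    intro m h
    rw [stdEx_lt_iff] at h
    exact h.2.2 rfl
  have hnba : ∀ m m', ¬ b m < a m' := by
    intro m m' h
    rw [stdEx_lt_iff] at h
    exact Bool.noConfusion h.1
  have hnaa : ∀ m m', ¬ a m < a m' := by
    intro m m' h
    rw [stdEx_lt_iff] at h
    exact Bool.noConfusion h.2.1
  have hnbb : ∀ m m', ¬ b m < b m' := by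
    intro m m' h
    rw [stdEx_lt_iff] at h
    exact Bool.noConfusion h.1
  -- decoder values
  have hT1 : ∀ m m', m ≠ m' → T' (σ (a m) (b m')) :=
    fun m m' h => (hστ _ _ (hab m m')).mp (hltab m m' h)
  have hT0 : ∀ x y : StdEx n, x ≠ y → ¬ x < y → ¬ T' (σ x y) :=
    fun x y h hnlt ht => hnlt ((hστ _ _ h).mpr ht)
  have hT0ab : ∀ m, ¬ T' (σ (a m) (b m)) := fun m => hT0 _ _ (hab m m) (hnab m)
  have hT0ba : ∀ m m', ¬ T' (σ (b m) (a m')) := fun m m' => hT0 _ _ (hba m m') (hnba m m')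
  have hT0aa : ∀ m m', m ≠ m' → ¬ T' (σ (a m) (a m')) :=
    fun m m' h => hT0 _ _ (haa m m' h) (hnaa m m')
  have hT0bb : ∀ m m', m ≠ m' → ¬ T' (σ (b m) (b m')) :=
    fun m m' h => hT0 _ _ (hbb m m' h) (hnbb m m')
  -- the key "forbidden 2x2 pattern" fact, coordinatewise
  have L1 : ∀ (m m' : Fin 4) (k : Fin 3), m ≠ m' →
      σ (a m) (b m') k = σ (a m') (b m) k →
      σ (a m) (b m) k ≠ σ (a m) (b m') k →
      σ (a m') (b m') k ≠ σ (a m) (b m') k → False := by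
    intro m m' k hmm' hcr hdm hdm'
    cases hv : σ (a m) (b m') k
    · -- cross bits are false, diagonal bits are true
      have h1 : B k (b m') (a m) := hσf _ _ _ hv
      have h2 : B k (b m) (a m') := hσf _ _ _ (hcr.symm.trans hv)
      rw [hv] at hdm hdm'
      have hd1 : B k (a m) (b m) := (hσt _ _ _).mp (by
        revert hdm; cases σ (a m) (b m) k <;> simp)
      have hd2 : B k (a m') (b m') := (hσt _ _ _).mp (by
        revert hdm'; cases σ (a m') (b m') k <;> simp)
      exact hab m m' (hanti k _ _ (htrans k _ _ _ (htrans k _ _ _ hd1 h2) hd2) h1)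
    · -- cross bits are true, diagonal bits are false
      have h1 : B k (a m) (b m') := (hσt _ _ _).mp hv
      have h2 : B k (a m') (b m) := (hσt _ _ _).mp (hcr.symm.trans hv)
      rw [hv] at hdm hdm'
      have hd1 : B k (b m) (a m) := hσf _ _ _ (by
        revert hdm; cases σ (a m) (b m) k <;> simp)
      have hd2 : B k (b m') (a m') := hσf _ _ _ (by
        revert hdm'; cases σ (a m') (b m') k <;> simp)
      exact hab m m (hanti k _ _ (htrans k _ _ _ (htrans k _ _ _ h1 hd2) h2) hd1)

  -- no two cross vectors are complementary
  have hnc : ∀ p1 q1 p2 q2 : Fin 4, p1 ≠ q1 → p2 ≠ q2 →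
      σ (a p1) (b q1) ≠ cpl (σ (a p2) (b q2)) := by
    intro p1 q1 p2 q2 h1 h2 h
    have he : σ (b q2) (a p2) = σ (a p1) (b q1) := by
      rw [hcompl (a p2) (b q2) (hab p2 q2)]; exact h.symm
    exact hT0ba q2 p2 (by rw [he]; exact hT1 p1 q1 h1)
  have hTs : T' (σ (a 0) (b 1)) := hT1 0 1 (by decide)
  by_cases hA : ∀ p q : Fin 4, p ≠ q → σ (a p) (b q) = σ (a 0) (b 1)
  · -- CASE A : all cross vectors are equal
    have hL1' : ∀ (m m' : Fin 4) (k : Fin 3), m ≠ m' →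
        σ (a m) (b m) k = σ (a 0) (b 1) k ∨ σ (a m') (b m') k = σ (a 0) (b 1) k := by
      intro m m' k h
      by_contra hc
      push_neg at hc
      have e1 : σ (a m) (b m') k = σ (a m') (b m) k := by
        rw [hA m m' h, hA m' m (Ne.symm h)]
      refine L1 m m' k h e1 ?_ ?_
      · rw [congrFun (hA m m' h) k]; exact hc.1
      · rw [congrFun (hA m m' h) k]; exact hc.2
    have hex : ∃ m : Fin 4, σ (a m) (b m) = σ (a 0) (b 1) := by
      by_contra hc
      push_neg at hc
      have hgk : ∀ m : Fin 4, ∃ k, σ (a m) (b m) k ≠ σ (a 0) (b 1) k := by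
        intro m
        by_contra h2
        push_neg at h2
        exact hc m (funext h2)
      choose g hg using hgk
      obtain ⟨m, m', hne2, heq⟩ := Fintype.exists_ne_map_eq_of_card_lt g (by simp)
      rcases hL1' m m' (g m) hne2 with h | h
      · exact hg m h
      · rw [heq] at h; exact hg m' h
    obtain ⟨m, hm⟩ := hex
    exact hT0ab m (by rw [hm]; exact hTs)
  · push_neg at hA
    obtain ⟨p, q, hpq, htne⟩ := hA
    have hTt : T' (σ (a p) (b q)) := hT1 p q hpq
    by_cases hB2 : ∀ p' q' : Fin 4, p' ≠ q' →
        σ (a p') (b q') = σ (a 0) (b 1) ∨ σ (a p') (b q') = σ (a p) (b q)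
    · -- CASE B : exactly two cross vectors
      have hstc := hnc 0 1 p q (by decide) hpq
      have hagree : ∃ k, σ (a 0) (b 1) k = σ (a p) (b q) k := by
        by_contra h
        push_neg at h
        apply hstc
        funext k
        have h' := h k
        show _ = !(σ (a p) (b q) k)
        revert h'
        cases σ (a 0) (b 1) k <;> cases σ (a p) (b q) k <;> simp
      have d1case : ∀ k₀ k₁ k₂ : Fin 3, (∀ k : Fin 3, k = k₀ ∨ k = k₁ ∨ k = k₂) →
          σ (a 0) (b 1) k₀ = σ (a p) (b q) k₀ → σ (a 0) (b 1) k₁ = σ (a p) (b q) k₁ →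
          σ (a 0) (b 1) k₂ ≠ σ (a p) (b q) k₂ → False := by
        intro k₀ k₁ k₂ hcov h0 h1 h2
        have hcrk : ∀ (p' q' : Fin 4) (k : Fin 3), p' ≠ q' →
            σ (a 0) (b 1) k = σ (a p) (b q) k →
            σ (a p') (b q') k = σ (a 0) (b 1) k := by
          intro p' q' k h hk
          rcases hB2 p' q' h with hv | hv
          · rw [hv]
          · rw [hv, hk]
        have hL1' : ∀ (m m' : Fin 4) (k : Fin 3), σ (a 0) (b 1) k = σ (a p) (b q) k →
            m ≠ m' → σ (a m) (b m) k = σ (a 0) (b 1) k ∨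
              σ (a m') (b m') k = σ (a 0) (b 1) k := by
          intro m m' k hk h
          by_contra hc
          push_neg at hc
          have e1 := hcrk m m' k h hk
          have e2 := hcrk m' m k (Ne.symm h) hk
          exact L1 m m' k h (e1.trans e2.symm) (by rw [e1]; exact hc.1)
            (by rw [e1]; exact hc.2)
        have hgood : ∃ m : Fin 4, σ (a m) (b m) k₀ = σ (a 0) (b 1) k₀ ∧
            σ (a m) (b m) k₁ = σ (a 0) (b 1) k₁ := by
          by_contra hc
          push_neg at hc
          have A0 := hL1' 0 1 k₀ h0 (by decide)
          have A1 := hL1' 0 2 k₀ h0 (by decide)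
          have A2 := hL1' 1 2 k₀ h0 (by decide)
          have B0 := hL1' 0 1 k₁ h1 (by decide)
          have B1 := hL1' 0 2 k₁ h1 (by decide)
          have B2 := hL1' 1 2 k₁ h1 (by decide)
          have c0 := hc 0; have c1 := hc 1; have c2 := hc 2
          tauto
        obtain ⟨m, hm0, hm1⟩ := hgood
        have ht2 : σ (a p) (b q) k₂ = !(σ (a 0) (b 1) k₂) := by
          revert h2; cases σ (a 0) (b 1) k₂ <;> cases σ (a p) (b q) k₂ <;> simp
        rcases eq_or_ne (σ (a m) (b m) k₂) (σ (a 0) (b 1) k₂) with hd | hd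
        · apply hT0ab m
          have he : σ (a m) (b m) = σ (a 0) (b 1) := funext fun k => by
            rcases hcov k with rfl | rfl | rfl <;> assumption
          rw [he]; exact hTs
        · apply hT0ab m
          have hd' : σ (a m) (b m) k₂ = σ (a p) (b q) k₂ := by
            rw [ht2]
            revert hd; cases σ (a m) (b m) k₂ <;> cases σ (a 0) (b 1) k₂ <;> simp
          have he : σ (a m) (b m) = σ (a p) (b q) := funext fun k => by
            rcases hcov k with rfl | rfl | rfl
            · rw [hm0, h0]
            · rw [hm1, h1]
            · exact hd'
          rw [he]; exact hTt
      have d2case : ∀ k₀ k₁ k₂ : Fin 3, (∀ k : Fin 3, k = k₀ ∨ k = k₁ ∨ k = k₂) →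
          σ (a 0) (b 1) k₀ = σ (a p) (b q) k₀ → σ (a 0) (b 1) k₁ ≠ σ (a p) (b q) k₁ →
          σ (a 0) (b 1) k₂ ≠ σ (a p) (b q) k₂ → False := by
        intro k₀ k₁ k₂ hcov h0 h1 h2
        have ht1 : σ (a p) (b q) k₁ = !(σ (a 0) (b 1) k₁) := by
          revert h1; cases σ (a 0) (b 1) k₁ <;> cases σ (a p) (b q) k₁ <;> simp
        have ht2 : σ (a p) (b q) k₂ = !(σ (a 0) (b 1) k₂) := by
          revert h2; cases σ (a 0) (b 1) k₂ <;> cases σ (a p) (b q) k₂ <;> simp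
        have hpar : ∀ x y : StdEx n, x ≠ y → ¬ x < y → ¬ y < x →
            xor (σ x y k₁) (σ x y k₂) =
              !(xor (σ (a 0) (b 1) k₁) (σ (a 0) (b 1) k₂)) := by
          intro x y hxy hnl1 hnl2
          have hvs : σ x y ≠ σ (a 0) (b 1) := fun h =>
            hT0 x y hxy hnl1 (by rw [h]; exact hTs)
          have hvt : σ x y ≠ σ (a p) (b q) := fun h =>
            hT0 x y hxy hnl1 (by rw [h]; exact hTt)
          have hvs' : σ y x ≠ σ (a 0) (b 1) := fun h =>
            hT0 y x (Ne.symm hxy) hnl2 (by rw [h]; exact hTs)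
          have hvt' : σ y x ≠ σ (a p) (b q) := fun h =>
            hT0 y x (Ne.symm hxy) hnl2 (by rw [h]; exact hTt)
          have hc' := hcompl x y hxy
          have c1 : ¬(σ x y k₁ = σ (a 0) (b 1) k₁ ∧ σ x y k₂ = σ (a 0) (b 1) k₂) := by
            rintro ⟨e1, e2⟩
            rcases eq_or_ne (σ x y k₀) (σ (a 0) (b 1) k₀) with e0 | e0
            · exact hvs (funext fun k => by rcases hcov k with rfl | rfl | rfl <;> assumption)
            · apply hvt'
              rw [hc']
              funext k
              rcases hcov k with rfl | rfl | rfl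
              · simp only [cpl]
                rw [← h0]
                revert e0; cases σ x y k <;> cases σ (a 0) (b 1) k <;> simp
              · simp only [cpl]
                rw [e1, ht1]
              · simp only [cpl]
                rw [e2, ht2]
          have c2 : ¬(σ x y k₁ = !(σ (a 0) (b 1) k₁) ∧
              σ x y k₂ = !(σ (a 0) (b 1) k₂)) := by
            rintro ⟨e1, e2⟩
            rcases eq_or_ne (σ x y k₀) (σ (a 0) (b 1) k₀) with e0 | e0
            · apply hvt
              funext k
              rcases hcov k with rfl | rfl | rfl
              · rw [e0, h0]
              · rw [e1, ht1]
              · rw [e2, ht2]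
            · apply hvs'
              rw [hc']
              funext k
              rcases hcov k with rfl | rfl | rfl
              · simp only [cpl]
                revert e0; cases σ x y k <;> cases σ (a 0) (b 1) k <;> simp
              · simp only [cpl]
                rw [e1]; simp
              · simp only [cpl]
                rw [e2]; simp
          exact par_bool _ _ _ _ c1 c2
        have hparc : ∀ p' q' : Fin 4, p' ≠ q' →
            xor (σ (a p') (b q') k₁) (σ (a p') (b q') k₂) =
              xor (σ (a 0) (b 1) k₁) (σ (a 0) (b 1) k₂) := by
          intro p' q' h
          rcases hB2 p' q' h with hv | hv <;> rw [hv]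
          rw [ht1, ht2]
          cases σ (a 0) (b 1) k₁ <;> cases σ (a 0) (b 1) k₂ <;> rfl
        have hxnn : ∀ u v : Bool, xor (!u) (!v) = xor u v := by decide
        have triA : ∀ m m' l : Fin 4, m ≠ m' → m ≠ l → m' ≠ l →
            σ (a m) (b l) k₁ = σ (a m') (b l) k₁ := by
          intro m m' l hmm hml hm'l
          exact tri_bool _ _ _ _ _ _ _
            (hchain (a m) (a m') (b l) k₁ (hab m l))
            (hchain (a m) (a m') (b l) k₂ (hab m l))
            (hpar (a m) (a m') (haa m m' hmm) (hnaa m m') (hnaa m' m))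
            (hparc m l hml) (hparc m' l hm'l)
        have triB : ∀ m m' l : Fin 4, m ≠ m' → m ≠ l → m' ≠ l →
            σ (b m) (a l) k₁ = σ (b m') (a l) k₁ := by
          intro m m' l hmm hml hm'l
          have hq : xor (σ (b m) (a l) k₁) (σ (b m) (a l) k₂) =
              xor (σ (a 0) (b 1) k₁) (σ (a 0) (b 1) k₂) := by
            rw [hcompl (a l) (b m) (hab l m)]
            simp only [cpl]
            rw [hxnn]
            exact hparc l m (fun h => hml h.symm)
          have hr : xor (σ (b m') (a l) k₁) (σ (b m') (a l) k₂) =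
              xor (σ (a 0) (b 1) k₁) (σ (a 0) (b 1) k₂) := by
            rw [hcompl (a l) (b m') (hab l m')]
            simp only [cpl]
            rw [hxnn]
            exact hparc l m' (fun h => hm'l h.symm)
          exact tri_bool _ _ _ _ _ _ _
            (hchain (b m) (b m') (a l) k₁ (hba m l))
            (hchain (b m) (b m') (a l) k₂ (hba m l))
            (hpar (b m) (b m') (hbb m m' hmm) (hnbb m m') (hnbb m' m))
            hq hr
        have hcr1 : ∀ p1 q1 p2 q2 : Fin 4, p1 ≠ q1 → p2 ≠ q2 →
            σ (a p1) (b q1) k₁ = σ (a p2) (b q2) k₁ := by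
          intro p1 q1 p2 q2 hx hy
          obtain ⟨z, hz1, hz2, hz3⟩ := fin4_choice p2 q2 q1
          have step1 : σ (a p1) (b q1) k₁ = σ (a z) (b q1) k₁ := by
            rcases eq_or_ne p1 z with rfl | hne
            · rfl
            · exact triA p1 z q1 hne hx hz3
          have step2 : σ (a z) (b q1) k₁ = σ (a z) (b q2) k₁ := by
            rcases eq_or_ne q1 q2 with rfl | hne
            · rfl
            · have h := triB q1 q2 z hne (Ne.symm hz3) (Ne.symm hz2)
              rw [hcompl (b q1) (a z) (hba q1 z), hcompl (b q2) (a z) (hba q2 z)]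
              simp only [cpl]
              rw [h]
          have step3 : σ (a z) (b q2) k₁ = σ (a p2) (b q2) k₁ := by
            rcases eq_or_ne z p2 with rfl | hne
            · rfl
            · exact triA z p2 q2 hne hz2 hy
          exact (step1.trans step2).trans step3
        exact h1 (hcr1 0 1 p q (by decide) hpq)
      rcases eq_or_ne (σ (a 0) (b 1) 0) (σ (a p) (b q) 0) with h0 | h0 <;>
        rcases eq_or_ne (σ (a 0) (b 1) 1) (σ (a p) (b q) 1) with h1 | h1 <;>
        rcases eq_or_ne (σ (a 0) (b 1) 2) (σ (a p) (b q) 2) with h2 | h2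
      · exact htne (funext fun k => by
          rcases fin3_cover k with rfl | rfl | rfl
          exacts [h0.symm, h1.symm, h2.symm])
      · exact d1case 0 1 2 (by decide) h0 h1 h2
      · exact d1case 0 2 1 (by decide) h0 h2 h1
      · exact d2case 0 1 2 (by decide) h0 h1 h2
      · exact d1case 1 2 0 (by decide) h1 h2 h0
      · exact d2case 1 0 2 (by decide) h1 h0 h2
      · exact d2case 2 0 1 (by decide) h2 h0 h1
      · obtain ⟨k, hk⟩ := hagree
        rcases fin3_cover k with rfl | rfl | rfl
        exacts [h0 hk, h1 hk, h2 hk]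
    · -- CASE C : at least three cross vectors
      push_neg at hB2
      obtain ⟨p', q', hpq', hr1, hr2⟩ := hB2
      have hTr : T' (σ (a p') (b q')) := hT1 p' q' hpq'
      have hst : σ (a 0) (b 1) ≠ σ (a p) (b q) := Ne.symm htne
      have hstc := hnc 0 1 p q (by decide) hpq
      have hsr : σ (a 0) (b 1) ≠ σ (a p') (b q') := Ne.symm hr1
      have hsrc := hnc 0 1 p' q' (by decide) hpq'
      have htr : σ (a p) (b q) ≠ σ (a p') (b q') := Ne.symm hr2
      have htrc := hnc p q p' q' hpq hpq'
      have hF : ∀ x y : StdEx n, x ≠ y → ¬ x < y → ¬ y < x →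
          σ x y = σ (a 0) (b 0) ∨ σ x y = cpl (σ (a 0) (b 0)) := by
        intro x y hxy hnl1 hnl2
        refine eight_vectors (σ (a 0) (b 1)) (σ (a p) (b q)) (σ (a p') (b q'))
          (σ x y) (σ (a 0) (b 0)) hst hstc hsr hsrc htr htrc
          ?_ ?_ ?_ ?_ ?_ ?_ ?_ ?_ ?_ ?_ ?_ ?_
        · exact fun h => hT0 x y hxy hnl1 (by rw [h]; exact hTs)
        · exact fun h => hT0 y x (Ne.symm hxy) hnl2
            (by rw [hcompl x y hxy, h, cpl_cpl]; exact hTs)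
        · exact fun h => hT0 x y hxy hnl1 (by rw [h]; exact hTt)
        · exact fun h => hT0 y x (Ne.symm hxy) hnl2
            (by rw [hcompl x y hxy, h, cpl_cpl]; exact hTt)
        · exact fun h => hT0 x y hxy hnl1 (by rw [h]; exact hTr)
        · exact fun h => hT0 y x (Ne.symm hxy) hnl2
            (by rw [hcompl x y hxy, h, cpl_cpl]; exact hTr)
        · exact fun h => hT0ab 0 (by rw [h]; exact hTs)
        · exact fun h => hT0ba 0 0
            (by rw [hcompl (a 0) (b 0) (hab 0 0), h, cpl_cpl]; exact hTs)
        · exact fun h => hT0ab 0 (by rw [h]; exact hTt)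
        · exact fun h => hT0ba 0 0
            (by rw [hcompl (a 0) (b 0) (hab 0 0), h, cpl_cpl]; exact hTt)
        · exact fun h => hT0ab 0 (by rw [h]; exact hTr)
        · exact fun h => hT0ba 0 0
            (by rw [hcompl (a 0) (b 0) (hab 0 0), h, cpl_cpl]; exact hTr)
      have hu : ∀ m : Fin 4, σ (a m) (b m) = σ (a 0) (b 0) ∨
          σ (a m) (b m) = cpl (σ (a 0) (b 0)) :=
        fun m => hF (a m) (b m) (hab m m) (hnab m) (hnba m m)
      have hpair : ∃ m m' : Fin 4, m ≠ m' ∧ σ (a m) (b m) = σ (a m') (b m') := by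
        rcases hu 0 with h0 | h0 <;> rcases hu 1 with h1 | h1 <;>
          rcases hu 2 with h2 | h2
        exacts [⟨0, 1, by decide, h0.trans h1.symm⟩,
          ⟨0, 1, by decide, h0.trans h1.symm⟩,
          ⟨0, 2, by decide, h0.trans h2.symm⟩,
          ⟨1, 2, by decide, h1.trans h2.symm⟩,
          ⟨1, 2, by decide, h1.trans h2.symm⟩,
          ⟨0, 2, by decide, h0.trans h2.symm⟩,
          ⟨0, 1, by decide, h0.trans h1.symm⟩,
          ⟨0, 1, by decide, h0.trans h1.symm⟩]
      obtain ⟨m, m', hmm', hdd⟩ := hpair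
      rcases hu m with hm | hm
      · have hm' : σ (a m') (b m') = σ (a 0) (b 0) := hdd.symm.trans hm
        rcases hF (a m) (a m') (haa m m' hmm') (hnaa m m') (hnaa m' m) with hx | hx
        · have hcr : σ (a m) (b m') = σ (a 0) (b 0) := by
            funext k
            have hstep := hchain (a m) (a m') (b m') k (hab m m')
              (by rw [hx, hm'])
            rw [hstep, hm']
          exact hT0ab 0 (by rw [← hcr]; exact hT1 m m' hmm')
        · have hx' : σ (a m') (a m) = σ (a 0) (b 0) := by
            rw [hcompl (a m) (a m') (haa m m' hmm'), hx, cpl_cpl]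
          have hcr : σ (a m') (b m) = σ (a 0) (b 0) := by
            funext k
            have hstep := hchain (a m') (a m) (b m) k (hab m' m)
              (by rw [hx', hm])
            rw [hstep, hm]
          exact hT0ab 0 (by rw [← hcr]; exact hT1 m' m (Ne.symm hmm'))
      · have hm'2 : σ (a m') (b m') = cpl (σ (a 0) (b 0)) := hdd.symm.trans hm
        have hbm : σ (b m) (a m) = σ (a 0) (b 0) := by
          rw [hcompl (a m) (b m) (hab m m), hm, cpl_cpl]
        have hbm' : σ (b m') (a m') = σ (a 0) (b 0) := by
          rw [hcompl (a m') (b m') (hab m' m'), hm'2, cpl_cpl]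
        have hwc : σ (b 0) (a 0) = cpl (σ (a 0) (b 0)) := hcompl (a 0) (b 0) (hab 0 0)
        rcases hF (b m) (b m') (hbb m m' hmm') (hnbb m m') (hnbb m' m) with hx | hx
        · have hcr : σ (b m) (a m') = σ (a 0) (b 0) := by
            funext k
            have hstep := hchain (b m) (b m') (a m') k (hba m m')
              (by rw [hx, hbm'])
            rw [hstep, hbm']
          have hrev : σ (a m') (b m) = cpl (σ (a 0) (b 0)) := by
            rw [hcompl (b m) (a m') (hba m m'), hcr]
          exact hT0ba 0 0 (by rw [hwc, ← hrev]; exact hT1 m' m (Ne.symm hmm'))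
        · have hx' : σ (b m') (b m) = σ (a 0) (b 0) := by
            rw [hcompl (b m) (b m') (hbb m m' hmm'), hx, cpl_cpl]
          have hcr : σ (b m') (a m) = σ (a 0) (b 0) := by
            funext k
            have hstep := hchain (b m') (b m) (a m) k (hba m' m)
              (by rw [hx', hbm])
            rw [hstep, hbm]
          have hrev : σ (a m) (b m') = cpl (σ (a 0) (b 0)) := by
            rw [hcompl (b m') (a m) (hba m' m), hcr]
          exact hT0ba 0 0 (by rw [hwc, ← hrev]; exact hT1 m m' hmm')


end StdExAux

namespace StdExAux

lemma hbr_pad {α : Type*} [PartialOrder α] {d : ℕ} (hd : 0 < d) (hle : d ≤ 3) :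
    HasBooleanRealizer α d → HasBooleanRealizer α 3 := by
  rintro ⟨B, τ, hlin, hiff⟩
  refine ⟨fun i => B (if h : (i : ℕ) < d then ⟨i, h⟩ else ⟨0, hd⟩),
    fun v => τ (fun j => v ⟨j, lt_of_lt_of_le j.2 hle⟩), fun i => hlin _, ?_⟩
  intro x y hxy
  rw [hiff x y hxy]
  have he : (fun j : Fin d => B j x y) =
      (fun j : Fin d =>
        B (if h : ((⟨(j : ℕ), lt_of_lt_of_le j.2 hle⟩ : Fin 3) : ℕ) < d then
            ⟨(⟨(j : ℕ), lt_of_lt_of_le j.2 hle⟩ : Fin 3), h⟩ else ⟨0, hd⟩) x y) := by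
    funext j
    rw [dif_pos (show ((⟨(j : ℕ), lt_of_lt_of_le j.2 hle⟩ : Fin 3) : ℕ) < d from j.2)]
  exact Iff.of_eq (congrArg τ he)

end StdExAux

/-- For every integer `n ≥ 4`, the Boolean dimension of the standard example `S_n` is `4`. -/
theorem stdEx_bdim (n : ℕ) (hn : 4 ≤ n) : bdim (StdEx n) = 4 := by
  unfold bdim
  apply le_antisymm
  · exact Nat.sInf_le (show 4 ∈ {d | 0 < d ∧ HasBooleanRealizer (StdEx n) d} from
      ⟨by norm_num, StdExAux.stdEx_hbr4 n⟩)
  · apply le_csInf ⟨4, show 4 ∈ {d | 0 < d ∧ HasBooleanRealizer (StdEx n) d} from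
      ⟨by norm_num, StdExAux.stdEx_hbr4 n⟩⟩
    rintro d ⟨hd, hbr⟩
    by_contra hlt
    push_neg at hlt
    exact StdExAux.no_hbr3 n hn (StdExAux.hbr_pad hd (by omega) hbr)
end

section
/- If P is a poset and bdim(P) = 2, then dim(P) = 2. -/
private lemma vecEq (f g : Fin 2 → Prop) (h0 : f 0 ↔ g 0) (h1 : f 1 ↔ g 1) : f = g := by
  funext i
  fin_cases i
  · exact propext h0
  · exact propext h1

private lemma tauto6 (u0 u1 w0 w1 r0 r1 : Prop)
    (h1 : ¬((u0 ↔ r0) ∧ (u1 ↔ r1)))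
    (h2 : ¬((u0 ↔ ¬r0) ∧ (u1 ↔ ¬r1)))
    (h3 : ¬((w0 ↔ r0) ∧ (w1 ↔ r1)))
    (h4 : ¬((w0 ↔ ¬r0) ∧ (w1 ↔ ¬r1))) :
    ((u0 ↔ w0) ∧ (u1 ↔ w1)) ∨ ((u0 ↔ ¬w0) ∧ (u1 ↔ ¬w1)) := by
  by_cases hr0 : r0 <;> by_cases hr1 : r1 <;> by_cases hu0 : u0 <;> by_cases hu1 : u1 <;>
    by_cases hw0 : w0 <;> by_cases hw1 : w1 <;> simp_all

private lemma keyLemma (u w r : Fin 2 → Prop)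
    (h1 : u ≠ r) (h2 : u ≠ fun i => ¬ r i)
    (h3 : w ≠ r) (h4 : w ≠ fun i => ¬ r i) :
    u = w ∨ u = fun i => ¬ w i := by
  have t := tauto6 (u 0) (u 1) (w 0) (w 1) (r 0) (r 1)
    (fun hc => h1 (vecEq _ _ hc.1 hc.2))
    (fun hc => h2 (vecEq _ _ hc.1 hc.2))
    (fun hc => h3 (vecEq _ _ hc.1 hc.2))
    (fun hc => h4 (vecEq _ _ hc.1 hc.2))
  rcases t with ⟨a, b⟩ | ⟨a, b⟩
  · exact Or.inl (vecEq _ _ a b)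
  · exact Or.inr (vecEq _ _ a b)


/-- If `bdim P = 2` then `dim P = 2`. -/
theorem dim_eq_two_of_bdim_eq_two (α : Type*) [Fintype α] [PartialOrder α]
    (h : bdim α = 2) : dimDM α = 2 := by
  classical
  -- extract facts from bdim = 2
  have hSne : {d | 0 < d ∧ HasBooleanRealizer α d}.Nonempty := by
    by_contra hempty
    rw [Set.not_nonempty_iff_eq_empty] at hempty
    rw [bdim, hempty, Nat.sInf_empty] at h
    omega
  have hmem2 : HasBooleanRealizer α 2 := by
    have := Nat.sInf_mem hSne
    rw [show sInf {d | 0 < d ∧ HasBooleanRealizer α d} = 2 from h] at this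
    exact this.2
  have hnot1 : ¬ HasBooleanRealizer α 1 := by
    intro hh
    have : (1 : ℕ) ∉ {d | 0 < d ∧ HasBooleanRealizer α d} :=
      Nat.notMem_of_lt_sInf (by rw [show sInf {d | 0 < d ∧ HasBooleanRealizer α d} = 2 from h]; omega)
    exact this ⟨one_pos, hh⟩
  -- not a chain: incomparable pair exists
  have hincomp : ∃ a b : α, ¬ a ≤ b ∧ ¬ b ≤ a := by
    by_contra hc
    push_neg at hc
    apply hnot1
    refine ⟨fun _ => (· ≤ ·), fun f => f 0, fun _ => ?_, fun x y hxy => ?_⟩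
    · exact { refl := fun a => le_refl a, trans := fun a b c => le_trans,
              antisymm := fun a b => le_antisymm,
              total := fun a b => by
                by_cases hab : a ≤ b
                · exact Or.inl hab
                · exact Or.inr (hc a b hab) }
    · exact ⟨le_of_lt, fun hle => lt_of_le_of_ne hle hxy⟩
  -- not an antichain: a comparable pair exists
  have hcomp : ∃ c d : α, c < d := by
    by_contra hc
    push_neg at hc
    apply hnot1
    refine ⟨fun _ x y => (Fintype.equivFin α) x ≤ (Fintype.equivFin α) y, fun _ => False,
      fun _ => ?_, fun x y hxy => ?_⟩
    · exact { refl := fun a => le_refl _, trans := fun a b c hab hbc => le_trans hab hbc,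
              antisymm := fun a b hab hba => (Fintype.equivFin α).injective (le_antisymm hab hba),
              total := fun a b => le_total _ _ }
    · simp [hc x y]
  obtain ⟨a, b, hab1, hab2⟩ := hincomp
  obtain ⟨c, d, hcd⟩ := hcomp
  obtain ⟨B, τ, hB, hspec⟩ := hmem2
  have hab_ne : a ≠ b := fun he => hab1 (he ▸ le_refl a)
  have hcd_ne : c ≠ d := ne_of_lt hcd
  haveI h0 := hB 0
  haveI h1 := hB 1
  have hflip : ∀ (i : Fin 2) (x y : α), x ≠ y → (B i y x ↔ ¬ B i x y) := by
    intro i x y hxy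
    haveI := hB i
    constructor
    · intro hyx hxy'
      exact hxy (antisymm hxy' hyx)
    · intro hn
      rcases total_of (B i) x y with h' | h'
      · exact absurd h' hn
      · exact h'
  -- tau facts
  have htab : ¬ τ (fun i => B i a b) := by
    intro ht
    exact hab1 (le_of_lt ((hspec a b hab_ne).mpr ht))
  have htba : ¬ τ (fun i => B i b a) := by
    intro ht
    exact hab2 (le_of_lt ((hspec b a hab_ne.symm).mpr ht))
  have htcd : τ (fun i => B i c d) := (hspec c d hcd_ne).mp hcd
  have htdc : ¬ τ (fun i => B i d c) := by
    intro ht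
    exact lt_asymm hcd ((hspec d c hcd_ne.symm).mpr ht)
  have hba_eq : (fun i => B i b a) = (fun i => ¬ B i a b) :=
    funext fun i => propext (hflip i a b hab_ne)
  have hdc_eq : (fun i => B i d c) = (fun i => ¬ B i c d) :=
    funext fun i => propext (hflip i c d hcd_ne)
  -- core claim: all comparable pairs have the same pattern as (c, d)
  have hsame : ∀ x y : α, x < y → (fun i => B i x y) = (fun i => B i c d) := by
    intro x y hxy
    have hne : x ≠ y := ne_of_lt hxy
    have htxy : τ (fun i => B i x y) := (hspec x y hne).mp hxy
    have e1 : (fun i => B i x y) ≠ (fun i => B i a b) := by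
      intro he; rw [he] at htxy; exact htab htxy
    have e2 : (fun i => B i x y) ≠ (fun i => ¬ B i a b) := by
      intro he; rw [← hba_eq] at he; rw [he] at htxy; exact htba htxy
    have e3 : (fun i => B i c d) ≠ (fun i => B i a b) := by
      intro he; rw [he] at htcd; exact htab htcd
    have e4 : (fun i => B i c d) ≠ (fun i => ¬ B i a b) := by
      intro he; rw [← hba_eq] at he; rw [he] at htcd; exact htba htcd
    rcases keyLemma _ _ _ e1 e2 e3 e4 with he | he
    · exact he
    · exfalso
      rw [← hdc_eq] at he
      rw [he] at htxy
      exact htdc htxy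
  -- construction of the realizer of size 2
  have hreal2 : HasRealizer α 2 := by
    refine ⟨fun i x y => if B i c d then B i x y else B i y x, fun i => ⟨?_, ?_⟩, ?_⟩
    · -- linear order
      haveI := hB i
      by_cases hi : B i c d
      · simp only [if_pos hi]
        exact hB i
      · simp only [if_neg hi]
        exact { refl := fun a => refl_of (B i) a, trans := fun a b c hab hbc => trans_of (B i) hbc hab,
                  antisymm := fun a b hab hba => antisymm hba hab, total := fun a b => total_of (B i) b a }
    · -- extension
      intro x y hle
      haveI := hB i
      rcases eq_or_lt_of_le hle with rfl | hlt
      · by_cases hi : B i c d <;> simp only [if_pos, if_neg, hi, if_true, if_false] <;>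
          exact refl_of (B i) x
      · have hq : B i x y = B i c d := congrFun (hsame x y hlt) i
        by_cases hi : B i c d
        · simp only [if_pos hi]
          exact hq.symm ▸ hi
        · simp only [if_neg hi]
          have hnxy : ¬ B i x y := fun h' => hi (hq ▸ h')
          exact (hflip i x y (ne_of_lt hlt)).mpr hnxy
    · -- intersection
      intro x y hLall
      by_contra hnle
      have hne : x ≠ y := fun he => hnle (he ▸ le_refl x)
      have hq : (fun i => B i x y) = (fun i => B i c d) := by
        funext i
        haveI := hB i
        have hL := hLall i
        by_cases hi : B i c d
        · simp only [if_pos hi] at hL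
          exact propext ⟨fun _ => hi, fun _ => hL⟩
        · simp only [if_neg hi] at hL
          have hnxy : ¬ B i x y := fun hxy' => hne (antisymm hxy' hL)
          exact propext ⟨fun h' => absurd h' hnxy, fun h' => absurd h' hi⟩
      have htxy : τ (fun i => B i x y) := by rw [hq]; exact htcd
      exact hnle (le_of_lt ((hspec x y hne).mpr htxy))
  -- no realizer of size 1 (not a chain)
  have hnotreal1 : ¬ HasRealizer α 1 := by
    rintro ⟨L, hext, hcap⟩
    haveI := (hext 0).1
    have htot := total_of (L 0) a b
    rcases htot with h' | h'
    · exact hab1 (hcap a b (fun i => by rw [Fin.fin_one_eq_zero i]; exact h'))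
    · exact hab2 (hcap b a (fun i => by rw [Fin.fin_one_eq_zero i]; exact h'))
  -- conclude
  rw [dimDM]
  have hmem : (2 : ℕ) ∈ {d | 0 < d ∧ HasRealizer α d} := ⟨two_pos, hreal2⟩
  apply le_antisymm
  · exact Nat.sInf_le hmem
  · by_contra hlt
    push_neg at hlt
    have hmem' := Nat.sInf_mem (⟨2, hmem⟩ : {d | 0 < d ∧ HasRealizer α d}.Nonempty)
    have hpos := hmem'.1
    have : sInf {d | 0 < d ∧ HasRealizer α d} = 1 := by omega
    rw [this] at hmem'
    exact hnotreal1 hmem'.2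
end

section
/- Hiraguchi's removal inequality: if P is a finite poset on at least two points and x is an element of P, then dim(P) ≤ 1 + dim(P − {x}). -/
section Hiraguchi

/-- Every nonempty finite poset has a realizer. -/
lemma exists_hasRealizer (γ : Type*) [Fintype γ] [Nonempty γ] [PartialOrder γ] :
    ∃ d, 0 < d ∧ HasRealizer γ d := by
  have H : ∀ p : γ × γ, ∃ lr : γ → γ → Prop, IsLinearOrder γ lr ∧
      ∀ a b : γ, (a ≤ b ∨ (¬ p.1 ≤ p.2 ∧ a ≤ p.2 ∧ p.1 ≤ b)) → lr a b := by
    intro p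
    set s : γ → γ → Prop := fun a b => a ≤ b ∨ (¬ p.1 ≤ p.2 ∧ a ≤ p.2 ∧ p.1 ≤ b) with hs
    haveI : IsRefl γ s := ⟨fun a => Or.inl le_rfl⟩
    haveI : IsTrans γ s := by
      constructor
      rintro a b c (hab | ⟨g, h1, h2⟩) (hbc | ⟨g', h1', h2'⟩)
      · exact Or.inl (hab.trans hbc)
      · exact Or.inr ⟨g', hab.trans h1', h2'⟩
      · exact Or.inr ⟨g, h1, h2.trans hbc⟩
      · exact absurd (h2.trans h1') g
    haveI : IsAntisymm γ s := by
      constructor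
      rintro a b (hab | ⟨g, h1, h2⟩) (hba | ⟨g', h1', h2'⟩)
      · exact le_antisymm hab hba
      · exact absurd ((h2'.trans hab).trans h1') g'
      · exact absurd ((h2.trans hba).trans h1) g
      · exact absurd (h2.trans h1') g
    haveI : IsPreorder γ s := ⟨⟩
    haveI : IsPartialOrder γ s := ⟨⟩
    obtain ⟨lr, h1, h2⟩ := extend_partialOrder s
    exact ⟨lr, h1, fun a b h => h2 a b h⟩
  choose f hf1 hf2 using H
  refine ⟨Fintype.card (γ × γ), Fintype.card_pos, ?_⟩
  set e := Fintype.equivFin (γ × γ) with he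
  refine ⟨fun i => f (e.symm i),
    fun i => ⟨hf1 _, fun a b hab => hf2 _ a b (Or.inl hab)⟩, ?_⟩
  intro y z h
  by_contra hyz
  have h1 := h (e (y, z))
  simp only [Equiv.symm_apply_apply] at h1
  have h2 : f (y, z) z y := hf2 (y, z) z y (Or.inr ⟨hyz, le_rfl, le_rfl⟩)
  haveI := hf1 (y, z)
  exact hyz (le_of_eq (antisymm h1 h2))

variable {α : Type*} [PartialOrder α] (x : α)

/-- Lift a relation on `{y // y ≠ x}` to `α`. -/
def liftRel (r : {y : α // y ≠ x} → {y : α // y ≠ x} → Prop) (a b : α) : Prop :=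
  ∀ (ha : a ≠ x) (hb : b ≠ x), r ⟨a, ha⟩ ⟨b, hb⟩

open Classical in
/-- Level function: elements of `Q` at level 0, `x` at level 1, the rest at level 2. -/
noncomputable def lvl (Q : α → Prop) (a : α) : ℕ :=
  if a = x then 1 else if Q a then 0 else 2

/-- Block linear order on `α`: `Q` (ordered by `r`) below `x` below the rest (ordered by `r`). -/
noncomputable def comb (Q : α → Prop) (r : {y : α // y ≠ x} → {y : α // y ≠ x} → Prop)
    (a b : α) : Prop :=
  lvl x Q a < lvl x Q b ∨ (lvl x Q a = lvl x Q b ∧ liftRel x r a b)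

variable {x}

omit [PartialOrder α] in
lemma lvl_self (Q : α → Prop) : lvl x Q x = 1 := by simp [lvl]

omit [PartialOrder α] in
lemma lvl_pos {Q : α → Prop} {a : α} (ha : a ≠ x) (hQ : Q a) : lvl x Q a = 0 := by
  simp [lvl, ha, hQ]

omit [PartialOrder α] in
lemma lvl_neg {Q : α → Prop} {a : α} (ha : a ≠ x) (hQ : ¬ Q a) : lvl x Q a = 2 := by
  simp [lvl, ha, hQ]

omit [PartialOrder α] in
lemma eq_x_of_lvl {Q : α → Prop} {a : α} (h : lvl x Q a = 1) : a = x := by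
  by_contra ha
  by_cases hQ : Q a
  · rw [lvl_pos ha hQ] at h; omega
  · rw [lvl_neg ha hQ] at h; omega

section comb

variable {Q : α → Prop} {r : {y : α // y ≠ x} → {y : α // y ≠ x} → Prop}

omit [PartialOrder α] in
lemma ne_x_of_lvl_eq {a b : α} (ha : a ≠ x) (h : lvl x Q a = lvl x Q b) : b ≠ x := by
  intro hbx
  subst hbx
  rw [lvl_self] at h
  exact ha (eq_x_of_lvl h)

omit [PartialOrder α] in
lemma comb_x_left {b : α} (hb : b ≠ x) : comb x Q r x b ↔ ¬ Q b := by
  constructor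
  · rintro (h | ⟨h, -⟩)
    · rw [lvl_self] at h
      intro hQ
      rw [lvl_pos hb hQ] at h; omega
    · exact absurd (eq_x_of_lvl (h.symm.trans (lvl_self Q))) hb
  · intro hQ
    exact Or.inl (by rw [lvl_self, lvl_neg hb hQ]; omega)

omit [PartialOrder α] in
lemma comb_x_right {b : α} (hb : b ≠ x) : comb x Q r b x ↔ Q b := by
  constructor
  · rintro (h | ⟨h, -⟩)
    · rw [lvl_self] at h
      by_contra hQ
      rw [lvl_neg hb hQ] at h; omega
    · exact absurd (eq_x_of_lvl (h.trans (lvl_self Q))) hb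
  · intro hQ
    exact Or.inl (by rw [lvl_self, lvl_pos hb hQ]; omega)

omit [PartialOrder α] in
lemma comb_restrict {a b : α} (ha : a ≠ x) (hb : b ≠ x) (h : comb x Q r a b) :
    (Q a ∧ ¬ Q b) ∨ r ⟨a, ha⟩ ⟨b, hb⟩ := by
  rcases h with h | ⟨-, h⟩
  · left
    by_cases hQa : Q a <;> by_cases hQb : Q b
    · rw [lvl_pos ha hQa, lvl_pos hb hQb] at h; omega
    · exact ⟨hQa, hQb⟩
    · rw [lvl_neg ha hQa, lvl_pos hb hQb] at h; omega
    · rw [lvl_neg ha hQa, lvl_neg hb hQb] at h; omega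
  · exact Or.inr (h ha hb)

lemma comb_isLinearExtension
    (hr : IsLinearOrder {y : α // y ≠ x} r)
    (hrext : ∀ u v : {y : α // y ≠ x}, u ≤ v → r u v)
    (hQd : ∀ a : α, a < x → Q a)
    (hQu : ∀ b : α, x < b → ¬ Q b)
    (hQdc : ∀ (a b : α), a ≠ x → b ≠ x → a ≤ b → Q b → Q a) :
    IsLinearExtension (comb x Q r) := by
  haveI := hr
  have hrefl : ∀ a : α, comb x Q r a a := by
    intro a
    by_cases ha : a = x
    · subst ha
      exact Or.inr ⟨rfl, fun h _ => absurd rfl h⟩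
    · exact Or.inr ⟨rfl, fun ha' hb' => refl_of r _⟩
  have htrans : ∀ a b c : α, comb x Q r a b → comb x Q r b c → comb x Q r a c := by
    rintro a b c (h1 | ⟨h1, h1'⟩) (h2 | ⟨h2, h2'⟩)
    · exact Or.inl (h1.trans h2)
    · exact Or.inl (h2 ▸ h1)
    · exact Or.inl (h1 ▸ h2)
    · refine Or.inr ⟨h1.trans h2, fun ha hc => ?_⟩
      have hb : b ≠ x := ne_x_of_lvl_eq ha h1
      exact trans_of r (h1' ha hb) (h2' hb hc)
  have hanti : ∀ a b : α, comb x Q r a b → comb x Q r b a → a = b := by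
    rintro a b (h1 | ⟨h1, h1'⟩) (h2 | ⟨h2, h2'⟩)
    · omega
    · omega
    · omega
    · by_cases ha : a = x
      · subst ha
        rw [lvl_self] at h1
        exact (eq_x_of_lvl h1.symm).symm
      · have hb : b ≠ x := ne_x_of_lvl_eq ha h1
        exact congrArg Subtype.val (antisymm_of r (h1' ha hb) (h2' hb ha))
  have htot : ∀ a b : α, comb x Q r a b ∨ comb x Q r b a := by
    intro a b
    rcases lt_trichotomy (lvl x Q a) (lvl x Q b) with h | h | h
    · exact Or.inl (Or.inl h)
    · by_cases ha : a = x
      · have hb : b = x := eq_x_of_lvl (by rw [← h, ha, lvl_self])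
        rw [ha, hb]
        exact Or.inl (hrefl x)
      · have hb : b ≠ x := ne_x_of_lvl_eq ha h
        rcases total_of r ⟨a, ha⟩ ⟨b, hb⟩ with hab | hba
        · exact Or.inl (Or.inr ⟨h, fun _ _ => hab⟩)
        · exact Or.inr (Or.inr ⟨h.symm, fun _ _ => hba⟩)
    · exact Or.inr (Or.inl h)
  refine ⟨{ refl := hrefl, trans := htrans, antisymm := hanti, total := htot }, ?_⟩
  intro a b hab
  by_cases ha : a = x
  · by_cases hb : b = x
    · rw [ha, hb]; exact hrefl x
    · have hxb : x < b := lt_of_le_of_ne ((le_of_eq ha.symm).trans hab) (Ne.symm hb)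
      rw [ha]
      exact Or.inl (by rw [lvl_self, lvl_neg hb (hQu b hxb)]; omega)
  · by_cases hb : b = x
    · have hax : a < x := lt_of_le_of_ne (hab.trans (le_of_eq hb)) ha
      rw [hb]
      exact Or.inl (by rw [lvl_self, lvl_pos ha (hQd a hax)]; omega)
    · have hr' : r ⟨a, ha⟩ ⟨b, hb⟩ := hrext _ _ (Subtype.mk_le_mk.mpr hab)
      by_cases hQb : Q b
      · have hQa : Q a := hQdc a b ha hb hab hQb
        exact Or.inr ⟨by rw [lvl_pos ha hQa, lvl_pos hb hQb], fun _ _ => hr'⟩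
      · by_cases hQa : Q a
        · exact Or.inl (by rw [lvl_pos ha hQa, lvl_neg hb hQb]; omega)
        · exact Or.inr ⟨by rw [lvl_neg ha hQa, lvl_neg hb hQb], fun _ _ => hr'⟩

end comb

end Hiraguchi

/-- Hiraguchi's removal inequality: `dim P <= 1 + dim (P - {x})`. -/
theorem dim_remove_point (α : Type*) [Fintype α] [PartialOrder α]
    (h : 2 ≤ Fintype.card α) (x : α) :
    dimDM α ≤ 1 + dimDM {y : α // y ≠ x} := by
  classical
  set β := {y : α // y ≠ x} with hβ
  haveI : Nonempty β := by
    obtain ⟨b, hb⟩ := Fintype.exists_ne_of_one_lt_card (by omega) x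
    exact ⟨⟨b, hb⟩⟩
  have hS : {d | 0 < d ∧ HasRealizer β d}.Nonempty := by
    obtain ⟨d, hd1, hd2⟩ := exists_hasRealizer β
    exact ⟨d, hd1, hd2⟩
  set t := dimDM β with hts
  obtain ⟨ht, L, hlin, hint⟩ : t ∈ {d | 0 < d ∧ HasRealizer β d} :=
    Nat.sInf_mem hS
  haveI hLI : ∀ j : Fin t, IsLinearOrder β (L j) := fun j => (hlin j).1
  have hLext : ∀ (j : Fin t) (u v : β), u ≤ v → L j u v := fun j => (hlin j).2
  set j0 : Fin t := ⟨0, ht⟩ with hj0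
  -- the three kinds of blocks
  set Q0 : α → Prop := fun a => a < x with hQ0
  set Q1 : α → Prop := fun a => a ≠ x ∧ ¬ x < a with hQ1
  set Qlow : Fin t → α → Prop :=
    fun j a => ∃ (ha : a ≠ x) (d : β), (d : α) < x ∧ L j ⟨a, ha⟩ d with hQlow
  -- basic facts about Qlow
  have hQlow_d : ∀ (j : Fin t) (a : α), a < x → Qlow j a := by
    intro j a halt
    have ha : a ≠ x := ne_of_lt halt
    exact ⟨ha, ⟨a, ha⟩, halt, refl_of (L j) _⟩
  have hQlow_u : ∀ (j : Fin t) (b : α), x < b → ¬ Qlow j b := by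
    rintro j b hxb ⟨hb, d, hdx, hLbd⟩
    have hdb : (d : α) ≤ b := le_of_lt (hdx.trans hxb)
    have : L j d ⟨b, hb⟩ := hLext j _ _ (by exact Subtype.coe_le_coe.mp hdb)
    have hbd : (⟨b, hb⟩ : β) = d := antisymm_of (L j) hLbd this
    rw [← hbd] at hdx
    exact lt_asymm hxb hdx
  have hQlow_dc : ∀ (j : Fin t) (a b : α), a ≠ x → b ≠ x → a ≤ b → Qlow j b → Qlow j a := by
    rintro j a b ha hb hab ⟨hb', d, hdx, hLbd⟩
    have : L j ⟨a, ha⟩ ⟨b, hb'⟩ := hLext j _ _ (Subtype.mk_le_mk.mpr hab)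
    exact ⟨ha, d, hdx, trans_of (L j) this hLbd⟩
  -- faithfulness of the low insertion
  have hfaithful : ∀ (j : Fin t) (a b : α) (ha : a ≠ x) (hb : b ≠ x),
      comb x (Qlow j) (L j) a b → L j ⟨a, ha⟩ ⟨b, hb⟩ := by
    intro j a b ha hb hc
    rcases comb_restrict ha hb hc with ⟨hQa, hQb⟩ | hL
    · rcases total_of (L j) ⟨a, ha⟩ ⟨b, hb⟩ with hL | hL
      · exact hL
      · obtain ⟨ha', d, hdx, hLad⟩ := hQa
        exact absurd ⟨hb, d, hdx, trans_of (L j) hL hLad⟩ hQb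
    · exact hL
  -- the family of linear extensions of α
  set G : Fin t → (α → α → Prop) :=
    fun j => if (j : ℕ) = 0 then comb x Q1 (L j) else comb x (Qlow j) (L j) with hG
  set F : Fin (t + 1) → (α → α → Prop) :=
    Fin.cons (comb x Q0 (L j0)) G with hF
  have hmem : (t + 1) ∈ {d | 0 < d ∧ HasRealizer α d} := by
    refine ⟨Nat.succ_pos t, F, ?_, ?_⟩
    · -- each member is a linear extension
      intro i
      refine Fin.cases ?_ ?_ i
      · rw [hF, Fin.cons_zero]
        refine comb_isLinearExtension (hLI j0) (hLext j0) (fun a ha => ha) ?_ ?_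
        · exact fun b hb => lt_asymm hb
        · exact fun a b ha hb hab hbx => lt_of_le_of_lt hab hbx
      · intro j
        simp only [hF, Fin.cons_succ, hG]
        by_cases hj : (j : ℕ) = 0
        · rw [if_pos hj]
          refine comb_isLinearExtension (hLI j) (hLext j) ?_ ?_ ?_
          · exact fun a ha => ⟨ne_of_lt ha, lt_asymm ha⟩
          · rintro b hb ⟨hb1, hb2⟩; exact hb2 hb
          · rintro a b ha hb hab ⟨hb1, hb2⟩
            exact ⟨ha, fun hxa => hb2 (lt_of_lt_of_le hxa hab)⟩
        · rw [if_neg hj]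
          exact comb_isLinearExtension (hLI j) (hLext j) (hQlow_d j) (hQlow_u j) (hQlow_dc j)
    · -- the intersection is the partial order
      intro a b hall
      have h0 : comb x Q0 (L j0) a b := by
        have := hall 0
        rwa [hF, Fin.cons_zero] at this
      have hsucc : ∀ j : Fin t, G j a b := by
        intro j
        have := hall j.succ
        rwa [hF, Fin.cons_succ] at this
      have h1 : comb x Q1 (L j0) a b := by
        have := hsucc j0
        simp only [hG] at this
        rwa [if_pos (show (j0 : ℕ) = 0 from rfl)] at this
      by_cases ha : a = x
      · rw [ha] at h1 ⊢
        by_cases hb : b = x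
        · rw [hb]
        · have hq := (comb_x_left hb).mp h1
          simp only [hQ1, not_and, not_not] at hq
          exact le_of_lt (hq hb)
      · by_cases hb : b = x
        · rw [hb] at h0 ⊢
          exact le_of_lt ((comb_x_right ha).mp h0)
        · -- both differ from x
          have hfin : L j0 ⟨a, ha⟩ ⟨b, hb⟩ → a ≤ b := by
            intro hL0
            refine Subtype.coe_le_coe.mpr (hint ⟨a, ha⟩ ⟨b, hb⟩ ?_)
            intro j
            by_cases hj : (j : ℕ) = 0
            · have hje : j = j0 := Fin.ext hj
              rwa [hje]
            · have := hsucc j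
              simp only [hG] at this
              rw [if_neg hj] at this
              exact hfaithful j a b ha hb this
          rcases comb_restrict ha hb h0 with ⟨hQ0a, hQ0b⟩ | hL0
          · rcases comb_restrict ha hb h1 with ⟨hQ1a, hQ1b⟩ | hL0
            · -- a < x and x < b
              simp only [hQ1, not_and, not_not] at hQ1b
              simp only [hQ0] at hQ0a
              exact le_of_lt (lt_trans hQ0a (hQ1b hb))
            · exact hfin hL0
          · exact hfin hL0
  have := Nat.sInf_le hmem
  rw [dimDM]
  omega
end

section
/- If P is a finite poset on at least two points and x ∈ P, then bdim(P) ≤ 3 + bdim(P − {x}). -/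
lemma extendPO {α : Type*} (r : α → α → Prop) (h1 : ∀ a, r a a)
    (h2 : ∀ a b c, r a b → r b c → r a c)
    (h3 : ∀ a b, r a b → r b a → a = b) :
    ∃ s, IsLinearOrder α s ∧ ∀ a b, r a b → s a b := by
  letI : IsPartialOrder α r := { refl := h1, trans := h2, antisymm := h3 }
  obtain ⟨s, hs, hrs⟩ := extend_partialOrder r
  exact ⟨s, hs, fun a b hab => hrs a b hab⟩

lemma mkLin {α : Type*} {r : α → α → Prop} (h1 : ∀ a, r a a)
    (h2 : ∀ a b c, r a b → r b c → r a c)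
    (h3 : ∀ a b, r a b → r b a → a = b)
    (h4 : ∀ a b, r a b ∨ r b a) : IsLinearOrder α r :=
  { refl := h1, trans := h2, antisymm := h3, total := h4 }

lemma exists_hbr (β : Type*) [Fintype β] [PartialOrder β] [Nonempty β] :
    ∃ d, 0 < d ∧ HasBooleanRealizer β d := by
  classical
  obtain ⟨R, hR, hRext⟩ := extendPO ((· ≤ ·) : β → β → Prop) le_refl
    (fun a b c => le_trans) (fun a b => le_antisymm)
  haveI := hR
  set d := Fintype.card (β ⊕ β) with hd
  have hdpos : 0 < d := Fintype.card_pos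
  let e : (β ⊕ β) ≃ Fin d := Fintype.equivFin _
  let Bot : β → β → β → Prop := fun w u v => u = w ∨ (v ≠ w ∧ R u v)
  let Top : β → β → β → Prop := fun w u v => v = w ∨ (u ≠ w ∧ R u v)
  have hBot : ∀ w, IsLinearOrder β (Bot w) := by
    intro w
    refine mkLin ?_ ?_ ?_ ?_
    · intro a
      by_cases hw : a = w
      · exact Or.inl hw
      · exact Or.inr ⟨hw, refl_of R a⟩
    · intro a b c hab hbc
      rcases hab with h | ⟨hb, hab⟩
      · exact Or.inl h
      · rcases hbc with h | ⟨hc, hbc⟩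
        · exact absurd h hb
        · exact Or.inr ⟨hc, trans_of R hab hbc⟩
    · intro a b hab hba
      rcases hab with h | ⟨hb, hab⟩
      · rcases hba with h' | ⟨ha, hba⟩
        · exact h.trans h'.symm
        · exact absurd h ha
      · rcases hba with h' | ⟨ha, hba⟩
        · exact absurd h' hb
        · exact antisymm hab hba
    · intro a b
      by_cases ha : a = w
      · exact Or.inl (Or.inl ha)
      by_cases hb : b = w
      · exact Or.inr (Or.inl hb)
      · rcases total_of R a b with h | h
        · exact Or.inl (Or.inr ⟨hb, h⟩)
        · exact Or.inr (Or.inr ⟨ha, h⟩)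
  have hTop : ∀ w, IsLinearOrder β (Top w) := by
    intro w
    refine mkLin ?_ ?_ ?_ ?_
    · intro a
      by_cases hw : a = w
      · exact Or.inl hw
      · exact Or.inr ⟨hw, refl_of R a⟩
    · intro a b c hab hbc
      rcases hbc with h | ⟨hb, hbc⟩
      · exact Or.inl h
      · rcases hab with h | ⟨ha, hab⟩
        · exact absurd h hb
        · exact Or.inr ⟨ha, trans_of R hab hbc⟩
    · intro a b hab hba
      rcases hab with h | ⟨ha, hab⟩
      · rcases hba with h' | ⟨hb, hba⟩
        · exact h'.trans h.symm
        · exact absurd h hb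
      · rcases hba with h' | ⟨hb, hba⟩
        · exact absurd h' ha
        · exact antisymm hab hba
    · intro a b
      by_cases hb : b = w
      · exact Or.inl (Or.inl hb)
      by_cases ha : a = w
      · exact Or.inr (Or.inl ha)
      · rcases total_of R a b with h | h
        · exact Or.inl (Or.inr ⟨ha, h⟩)
        · exact Or.inr (Or.inr ⟨hb, h⟩)
  refine ⟨d, hdpos, fun k => Sum.elim Bot Top (e.symm k),
    fun q => ∃ u v : β, u < v ∧ ∀ i, q i ↔ Sum.elim Bot Top (e.symm i) u v, ?_, ?_⟩
  · intro i
    show IsLinearOrder β (Sum.elim Bot Top (e.symm i))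
    rcases h : e.symm i with w | w
    · exact hBot w
    · exact hTop w
  · intro u v huv
    constructor
    · intro hlt
      exact ⟨u, v, hlt, fun i => Iff.rfl⟩
    · rintro ⟨a, b, hab, hiff⟩
      have hBa : Bot a u v := by
        have := (hiff (e (Sum.inl a))).mpr
        simp only [Equiv.symm_apply_apply, Sum.elim_inl] at this ⊢
        exact this (Or.inl rfl)
      have hTa : ¬ Top a u v := by
        have := (hiff (e (Sum.inr a))).mp
        simp only [Equiv.symm_apply_apply, Sum.elim_inr] at this
        intro hc
        rcases this hc with h | ⟨h, _⟩
        · exact hab.ne' h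
        · exact h rfl
      have hBb : ¬ Bot b u v := by
        have := (hiff (e (Sum.inl b))).mp
        simp only [Equiv.symm_apply_apply, Sum.elim_inl] at this
        intro hc
        rcases this hc with h | ⟨h, _⟩
        · exact hab.ne h
        · exact h rfl
      have hTb : Top b u v := by
        have := (hiff (e (Sum.inr b))).mpr
        simp only [Equiv.symm_apply_apply, Sum.elim_inr] at this ⊢
        exact this (Or.inl rfl)
      have hu : u = a := by
        rcases hBa with h | ⟨hv, hr⟩
        · exact h
        · by_cases hu : u = a
          · exact hu
          · exact absurd (Or.inr ⟨hu, hr⟩) hTa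
      have hv : v = b := by
        rcases hTb with h | ⟨hu', hr⟩
        · exact h
        · by_cases hv : v = b
          · exact hv
          · exact absurd (Or.inr ⟨hv, hr⟩) hBb
      rw [hu, hv]; exact hab

/-- Removing a point decreases Boolean dimension by at most three. -/
theorem bdim_remove_point (α : Type*) [Fintype α] [PartialOrder α]
    (h : 2 ≤ Fintype.card α) (x : α) :
    bdim α ≤ 3 + bdim {y : α // y ≠ x} := by
  classical
  have hnt : Nontrivial α := Fintype.one_lt_card_iff_nontrivial.mp h
  obtain ⟨y0, hy0⟩ := exists_ne x
  haveI : Nonempty {y : α // y ≠ x} := ⟨⟨y0, hy0⟩⟩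
  obtain ⟨d₀, hd₀⟩ := exists_hbr {y : α // y ≠ x}
  have hmem : 0 < bdim {y : α // y ≠ x} ∧
      HasBooleanRealizer {y : α // y ≠ x} (bdim {y : α // y ≠ x}) :=
    Nat.sInf_mem (s := {d | 0 < d ∧ HasBooleanRealizer {y : α // y ≠ x} d}) ⟨d₀, hd₀⟩
  set d := bdim {y : α // y ≠ x} with hdd
  obtain ⟨hdpos, L, τ, hLlin, hLτ⟩ := hmem
  -- B1 : linear order whose up-set at x is exactly the strict up-set of x
  obtain ⟨B1, hB1, hB1e⟩ := extendPO (fun a b : α => a ≤ b ∨ (¬ x ≤ a ∧ x ≤ b))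
    (fun a => Or.inl le_rfl)
    (by
      rintro a b c (hab | ⟨h1, h2⟩) (hbc | ⟨h3, h4⟩)
      · exact Or.inl (hab.trans hbc)
      · exact Or.inr ⟨fun hxa => h3 (hxa.trans hab), h4⟩
      · exact Or.inr ⟨h1, h2.trans hbc⟩
      · exact absurd h2 h3)
    (by
      rintro a b (hab | ⟨h1, h2⟩) (hba | ⟨h3, h4⟩)
      · exact le_antisymm hab hba
      · exact absurd (h4.trans hab) h3
      · exact absurd (h2.trans hba) h1
      · exact absurd h2 h3)
  -- B2 : linear order whose down-set at x is exactly the strict down-set of x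
  obtain ⟨B2, hB2, hB2e⟩ := extendPO (fun a b : α => a ≤ b ∨ (a ≤ x ∧ ¬ b ≤ x))
    (fun a => Or.inl le_rfl)
    (by
      rintro a b c (hab | ⟨h1, h2⟩) (hbc | ⟨h3, h4⟩)
      · exact Or.inl (hab.trans hbc)
      · exact Or.inr ⟨hab.trans h3, h4⟩
      · exact Or.inr ⟨h1, fun hc => h2 (hbc.trans hc)⟩
      · exact absurd h3 h2)
    (by
      rintro a b (hab | ⟨h1, h2⟩) (hba | ⟨h3, h4⟩)
      · exact le_antisymm hab hba
      · exact absurd (hab.trans h3) h4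
      · exact absurd (hba.trans h1) h2
      · exact absurd h3 h2)
  -- B3 : x at the bottom; on the rest, reverses the intersection of the L i
  obtain ⟨B3, hB3, hB3e⟩ := extendPO
    (fun a b : α => a = b ∨ (a = x ∧ b ≠ x) ∨
      ∃ (ha : a ≠ x) (hb : b ≠ x), ∀ i, L i ⟨b, hb⟩ ⟨a, ha⟩)
    (fun a => Or.inl rfl)
    (by
      rintro a b c (rfl | ⟨hax, hbx⟩ | ⟨ha, hb, hab⟩) hbc
      · exact hbc
      · rcases hbc with rfl | ⟨hbx', _⟩ | ⟨hb', hc, hbc⟩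
        · exact Or.inr (Or.inl ⟨hax, hbx⟩)
        · exact absurd hbx' hbx
        · exact Or.inr (Or.inl ⟨hax, hc⟩)
      · rcases hbc with rfl | ⟨hbx, _⟩ | ⟨hb', hc, hbc⟩
        · exact Or.inr (Or.inr ⟨ha, hb, hab⟩)
        · exact absurd hbx hb
        · refine Or.inr (Or.inr ⟨ha, hc, fun i => ?_⟩)
          haveI := hLlin i
          exact trans_of (L i) (hbc i) (hab i))
    (by
      rintro a b (rfl | ⟨hax, hbx⟩ | ⟨ha, hb, hab⟩) hba
      · rfl
      · rcases hba with h | ⟨hbx2, hax2⟩ | ⟨hb2, ha2, _⟩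
        · exact h.symm
        · exact absurd hbx2 hbx
        · exact absurd hax ha2
      · rcases hba with h | ⟨hbx2, hax2⟩ | ⟨hb2, ha2, hba⟩
        · exact h.symm
        · exact absurd hbx2 hb
        · haveI := hLlin ⟨0, hdpos⟩
          have := antisymm (hab ⟨0, hdpos⟩) (hba ⟨0, hdpos⟩)
          exact (congrArg Subtype.val this).symm)
  haveI := hB1; haveI := hB2; haveI := hB3
  -- the extensions of the L i with x at the bottom
  set L' : Fin d → α → α → Prop :=
    fun i a b => a = x ∨ ∃ (ha : a ≠ x) (hb : b ≠ x), L i ⟨a, ha⟩ ⟨b, hb⟩ with hL'def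
  have hL' : ∀ i, IsLinearOrder α (L' i) := by
    intro i
    haveI := hLlin i
    refine mkLin ?_ ?_ ?_ ?_
    · intro a
      by_cases ha : a = x
      · exact Or.inl ha
      · exact Or.inr ⟨ha, ha, refl_of (L i) _⟩
    · rintro a b c (ha | ⟨ha, hb, hab⟩) hbc
      · exact Or.inl ha
      · rcases hbc with hb' | ⟨hb2, hc, hbc⟩
        · exact absurd hb' hb
        · exact Or.inr ⟨ha, hc, trans_of (L i) hab hbc⟩
    · rintro a b (ha | ⟨ha, hb, hab⟩) hba
      · rcases hba with hb | ⟨hb, ha2, _⟩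
        · exact ha.trans hb.symm
        · exact absurd ha ha2
      · rcases hba with hbx | ⟨hb2, ha2, hba⟩
        · exact absurd hbx hb
        · exact congrArg Subtype.val (antisymm hab hba)
    · intro a b
      by_cases ha : a = x
      · exact Or.inl (Or.inl ha)
      by_cases hb : b = x
      · exact Or.inr (Or.inl hb)
      rcases total_of (L i) ⟨a, ha⟩ ⟨b, hb⟩ with hl | hl
      · exact Or.inl (Or.inr ⟨ha, hb, hl⟩)
      · exact Or.inr (Or.inr ⟨hb, ha, hl⟩)
  -- the key equivalence
  have main : ∀ u v : α, u ≠ v →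
      (u < v ↔
        ((((∀ i, L' i u v) ∧ B3 u v) ∨ ((∀ i, ¬ L' i u v) ∧ ¬ B3 u v)) ∧
          (B1 u v ∧ B2 u v)) ∨
        (¬(((∀ i, L' i u v) ∧ B3 u v) ∨ ((∀ i, ¬ L' i u v) ∧ ¬ B3 u v)) ∧
          τ (fun i => L' i u v))) := by
    intro u v huv
    by_cases hu : u = x
    · subst hu
      have hvx : v ≠ u := fun hc => huv hc.symm
      have hs : ∀ i, L' i u v := fun i => Or.inl rfl
      have ha3 : B3 u v := hB3e _ _ (Or.inr (Or.inl ⟨rfl, hvx⟩))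
      constructor
      · intro hlt
        refine Or.inl ⟨Or.inl ⟨hs, ha3⟩, hB1e _ _ (Or.inl hlt.le),
          hB2e _ _ (Or.inr ⟨le_rfl, fun hvle => hvx (le_antisymm hvle hlt.le)⟩)⟩
      · rintro (⟨-, h1, h2⟩ | ⟨hnb, -⟩)
        · have hxv : u ≤ v := by
            by_contra hxv
            have : B1 v u := hB1e _ _ (Or.inr ⟨hxv, le_rfl⟩)
            exact huv (antisymm h1 this)
          exact lt_of_le_of_ne hxv huv
        · exact absurd (Or.inl ⟨hs, ha3⟩) hnb
    · by_cases hv : v = x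
      · subst hv
        have hs : ∀ i, ¬ L' i u v := by
          rintro i (hc | ⟨ha, hb, -⟩)
          · exact hu hc
          · exact hb rfl
        have ha3 : ¬ B3 u v := by
          intro hc
          have hxu : B3 v u := hB3e _ _ (Or.inr (Or.inl ⟨rfl, hu⟩))
          exact hu (antisymm hc hxu)
        constructor
        · intro hlt
          exact Or.inl ⟨Or.inr ⟨hs, ha3⟩, hB1e _ _ (Or.inl hlt.le),
            hB2e _ _ (Or.inl hlt.le)⟩
        · rintro (⟨-, h1, h2⟩ | ⟨hnb, -⟩)
          · have hux : u ≤ v := by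
              by_contra hux
              have : B2 v u := hB2e _ _ (Or.inr ⟨le_rfl, hux⟩)
              exact hu (antisymm h2 this)
            exact lt_of_le_of_ne hux huv
          · exact absurd (Or.inr ⟨hs, ha3⟩) hnb
      · have hsi : ∀ i, L' i u v ↔ L i ⟨u, hu⟩ ⟨v, hv⟩ := by
          intro i
          constructor
          · rintro (hc | ⟨ha, hb, hl⟩)
            · exact absurd hc hu
            · exact hl
          · intro hl
            exact Or.inr ⟨hu, hv, hl⟩
        have hnb : ¬(((∀ i, L' i u v) ∧ B3 u v) ∨ ((∀ i, ¬ L' i u v) ∧ ¬ B3 u v)) := by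
          rintro (⟨hall, ha3⟩ | ⟨hnone, hna3⟩)
          · have : B3 v u :=
              hB3e _ _ (Or.inr (Or.inr ⟨hv, hu, fun i => (hsi i).mp (hall i)⟩))
            exact huv (antisymm ha3 this)
          · have hall' : ∀ i, L i ⟨v, hv⟩ ⟨u, hu⟩ := by
              intro i
              haveI := hLlin i
              rcases total_of (L i) ⟨u, hu⟩ ⟨v, hv⟩ with hl | hl
              · exact absurd (Or.inr ⟨hu, hv, hl⟩) (hnone i)
              · exact hl
            exact hna3 (hB3e _ _ (Or.inr (Or.inr ⟨hu, hv, hall'⟩)))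
        have hτs : (fun i => L' i u v) = (fun i => L i ⟨u, hu⟩ ⟨v, hv⟩) :=
          funext fun i => propext (hsi i)
        have hne : (⟨u, hu⟩ : {y : α // y ≠ x}) ≠ ⟨v, hv⟩ := by
          simp only [ne_eq, Subtype.mk.injEq]
          exact huv
        have hlt : u < v ↔ (⟨u, hu⟩ : {y : α // y ≠ x}) < ⟨v, hv⟩ :=
          (Subtype.mk_lt_mk).symm
        rw [hlt, hLτ _ _ hne, ← hτs]
        constructor
        · intro ht
          exact Or.inr ⟨hnb, ht⟩
        · rintro (⟨hb, -⟩ | ⟨-, ht⟩)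
          · exact absurd hb hnb
          · exact ht
  -- assemble the boolean realizer of size 3 + d
  refine Nat.sInf_le ⟨by omega,
    fun k => Sum.elim ![B1, B2, B3] L' (finSumFinEquiv.symm k),
    fun q =>
      ((((∀ i : Fin d, q (finSumFinEquiv (Sum.inr i))) ∧ q (finSumFinEquiv (Sum.inl 2))) ∨
        ((∀ i : Fin d, ¬ q (finSumFinEquiv (Sum.inr i))) ∧ ¬ q (finSumFinEquiv (Sum.inl 2)))) ∧
        (q (finSumFinEquiv (Sum.inl 0)) ∧ q (finSumFinEquiv (Sum.inl 1)))) ∨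
      (¬(((∀ i : Fin d, q (finSumFinEquiv (Sum.inr i))) ∧ q (finSumFinEquiv (Sum.inl 2))) ∨
        ((∀ i : Fin d, ¬ q (finSumFinEquiv (Sum.inr i))) ∧ ¬ q (finSumFinEquiv (Sum.inl 2)))) ∧
        τ (fun i => q (finSumFinEquiv (Sum.inr i)))),
    ?_, ?_⟩
  · intro k
    show IsLinearOrder α (Sum.elim ![B1, B2, B3] L' (finSumFinEquiv.symm k))
    rcases hk : finSumFinEquiv.symm k with j | i
    · rw [Sum.elim_inl]
      fin_cases j
      · exact hB1
      · exact hB2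
      · exact hB3
    · exact hL' i
  · intro u v huv
    have := main u v huv
    simpa only [Equiv.symm_apply_apply, Sum.elim_inl, Sum.elim_inr,
      Matrix.cons_val_zero, Matrix.cons_val_one, Matrix.head_cons,
      Matrix.cons_val_two, Matrix.tail_cons, Matrix.vecHead, Matrix.vecTail,
      Matrix.cons_val_succ, Function.comp] using this
end

section
/- For every s ≥ 1, if n ≥ Ram(3,4;s²) then the poset P(1,2;n) of all 1-element and 2-element subsets of [n] ordered by inclusion has local dimension greater than s. -/
/-- Ramsey property: every `r`-coloring of the `k`-element subsets of an `N`-element set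
admits an `h`-element set all of whose `k`-element subsets get the same color. -/
def RamseyProp (N k h r : ℕ) : Prop :=
  ∀ φ : Finset (Fin N) → Fin r, ∃ H : Finset (Fin N), H.card = h ∧
    ∃ c : Fin r, ∀ S ⊆ H, S.card = k → φ S = c

/-- The Ramsey number `Ram(k,h;r)`. -/
noncomputable def Ram (k h r : ℕ) : ℕ := sInf {N | RamseyProp N k h r}


/-- The poset `P(1,2;n)` of all 1-element and 2-element subsets of `[n]`,
ordered by inclusion. -/
def P12 (n : ℕ) := {S : Finset (Fin n) // S.card = 1 ∨ S.card = 2}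

instance (n : ℕ) : PartialOrder (P12 n) := by unfold P12; infer_instance



/-- pigeonhole helper -/
lemma fiber_big {N r h : ℕ} (g : Fin N → Fin r) (hN : r * h < N) :
    ∃ (c : Fin r) (H : Finset (Fin N)), H.card = h ∧ ∀ x ∈ H, g x = c := by
  have hcard : Fintype.card (Fin r) * h < Fintype.card (Fin N) := by simpa using hN
  obtain ⟨c, hc⟩ := Fintype.exists_lt_card_fiber_of_mul_lt_card g hcard
  obtain ⟨H, hH1, hH2⟩ := Finset.exists_subset_card_eq (n := h) (le_of_lt hc)
  exact ⟨c, H, hH2, fun x hx => by simpa using (hH1 hx)⟩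

lemma sorted3 {M : ℕ} (I : Finset (Fin M)) (h : I.card = 3) :
    ∃ p q s : Fin M, p < q ∧ q < s ∧ I = {p, q, s} := by
  let e := I.orderEmbOfFin h
  refine ⟨e 0, e 1, e 2, e.strictMono (by decide), e.strictMono (by decide), ?_⟩
  have hsub : ({e 0, e 1, e 2} : Finset (Fin M)) ⊆ I := by
    intro x hx
    simp only [Finset.mem_insert, Finset.mem_singleton] at hx
    rcases hx with h | h | h <;> subst h <;> exact I.orderEmbOfFin_mem h _
  have hcard : ({e 0, e 1, e 2} : Finset (Fin M)).card = 3 := by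
    rw [Finset.card_insert_of_notMem, Finset.card_insert_of_notMem, Finset.card_singleton]
    · simp only [Finset.mem_singleton]
      exact (e.injective.ne (by decide))
    · simp only [Finset.mem_insert, Finset.mem_singleton]
      push_neg
      exact ⟨e.injective.ne (by decide), e.injective.ne (by decide)⟩
  exact (Finset.eq_of_subset_of_card_le hsub (by omega)).symm

/-- End-homogeneous sequences for pair colorings. -/
lemma claim2 (r : ℕ) : ∀ m : ℕ, ∃ N : ℕ, ∀ φ : Finset (Fin N) → Fin r,
    ∃ f : Fin m → Fin N, StrictMono f ∧ ∃ c : Fin m → Fin r,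
      ∀ i j : Fin m, i < j → φ {f i, f j} = c i := by
  intro m
  induction m with
  | zero => exact ⟨0, fun φ => ⟨Fin.elim0, fun i => i.elim0, Fin.elim0, fun i => i.elim0⟩⟩
  | succ m ih =>
    obtain ⟨N, hN⟩ := ih
    refine ⟨r * N + 1 + 1, fun φ => ?_⟩
    have hpig := fiber_big (r := r) (N := r * N + 1) (h := N)
      (fun y => φ {0, Fin.succ y}) (by omega)
    obtain ⟨c₀, H, hHcard, hHcol⟩ := hpig
    set e := H.orderEmbOfFin hHcard with he
    set emb : Fin N ↪ Fin (r * N + 1 + 1) :=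
      ⟨fun i => Fin.succ (e i), fun a b hab => e.injective (Fin.succ_injective _ hab)⟩ with hemb
    obtain ⟨f', hf'mono, c', hc'⟩ := hN (fun S => φ (S.map emb))
    refine ⟨Fin.cases 0 (fun k => Fin.succ (e (f' k))), ?_, Fin.cases c₀ (fun k => c' k), ?_⟩
    · intro i j hij
      induction i using Fin.cases with
      | zero =>
        induction j using Fin.cases with
        | zero => exact absurd hij (lt_irrefl _)
        | succ j' => simp only [Fin.cases_zero, Fin.cases_succ]; exact Fin.succ_pos _
      | succ i' =>
        induction j using Fin.cases with
        | zero => exact absurd hij (Fin.not_lt_zero _).elim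
        | succ j' =>
          simp only [Fin.cases_succ]
          have : i' < j' := by
            rwa [Fin.succ_lt_succ_iff] at hij
          exact Fin.succ_lt_succ_iff.mpr (e.strictMono (hf'mono this))
    · intro i j hij
      induction i using Fin.cases with
      | zero =>
        induction j using Fin.cases with
        | zero => exact absurd hij (lt_irrefl _)
        | succ j' =>
          simp only [Fin.cases_zero, Fin.cases_succ]
          simpa using hHcol _ (H.orderEmbOfFin_mem hHcard _)
      | succ i' =>
        induction j using Fin.cases with
        | zero => exact absurd hij (Fin.not_lt_zero _).elim
        | succ j' =>
          have hij' : i' < j' := by rwa [Fin.succ_lt_succ_iff] at hij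
          have := hc' i' j' hij'
          simp only [Fin.cases_succ]
          rw [← this]
          congr 1
          rw [Finset.map_insert, Finset.map_singleton]
          rfl

/-- all-pairs monochromatic Ramsey for pairs -/
lemma pairRamsey (r h : ℕ) : ∃ N : ℕ, ∀ ψ : Finset (Fin N) → Fin r,
    ∃ (H : Finset (Fin N)) (c₀ : Fin r), H.card = h ∧
      ∀ y ∈ H, ∀ z ∈ H, y ≠ z → ψ {y, z} = c₀ := by
  obtain ⟨N, hN⟩ := claim2 r (r * h + 1)
  refine ⟨N, fun ψ => ?_⟩
  obtain ⟨f, hf, c, hc⟩ := hN ψ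
  obtain ⟨c₀, I, hIcard, hIcol⟩ := fiber_big (h := h) c (by omega)
  refine ⟨I.map ⟨f, hf.injective⟩, c₀, by simp [hIcard], ?_⟩
  intro y hy z hz hyz
  simp only [Finset.mem_map, Function.Embedding.coeFn_mk] at hy hz
  obtain ⟨p, hpI, rfl⟩ := hy
  obtain ⟨q, hqI, rfl⟩ := hz
  have hpq : p ≠ q := fun h => hyz (by rw [h])
  rcases lt_or_gt_of_ne hpq with hlt | hgt
  · rw [hc p q hlt]; exact hIcol p hpI
  · rw [Finset.pair_comm, hc q p hgt]; exact hIcol q hqI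

/-- End-homogeneous sequences for triple colorings. -/
lemma claim3 (r : ℕ) : ∀ m : ℕ, ∃ N : ℕ, ∀ φ : Finset (Fin N) → Fin r,
    ∃ f : Fin m → Fin N, StrictMono f ∧ ∃ c : Fin m → Fin r,
      ∀ i j k : Fin m, i < j → j < k → φ {f i, f j, f k} = c i := by
  intro m
  induction m with
  | zero => exact ⟨0, fun φ => ⟨Fin.elim0, fun i => i.elim0, Fin.elim0, fun i => i.elim0⟩⟩
  | succ m ih =>
    obtain ⟨N, hN⟩ := ih
    obtain ⟨R, hR⟩ := pairRamsey r N
    refine ⟨R + 1, fun φ => ?_⟩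
    obtain ⟨H, c₀, hHcard, hHcol⟩ := hR (fun S => φ (insert 0 (S.map ⟨Fin.succ, Fin.succ_injective _⟩)))
    set e := H.orderEmbOfFin hHcard with he
    set emb : Fin N ↪ Fin (R + 1) :=
      ⟨fun i => Fin.succ (e i), fun a b hab => e.injective (Fin.succ_injective _ hab)⟩ with hemb
    obtain ⟨f', hf'mono, c', hc'⟩ := hN (fun S => φ (S.map emb))
    refine ⟨Fin.cases 0 (fun k => Fin.succ (e (f' k))), ?_, Fin.cases c₀ (fun k => c' k), ?_⟩
    · intro i j hij
      induction i using Fin.cases with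
      | zero =>
        induction j using Fin.cases with
        | zero => exact absurd hij (lt_irrefl _)
        | succ j' => simp only [Fin.cases_zero, Fin.cases_succ]; exact Fin.succ_pos _
      | succ i' =>
        induction j using Fin.cases with
        | zero => exact absurd hij (Fin.not_lt_zero _).elim
        | succ j' =>
          simp only [Fin.cases_succ]
          have : i' < j' := by rwa [Fin.succ_lt_succ_iff] at hij
          exact Fin.succ_lt_succ_iff.mpr (e.strictMono (hf'mono this))
    · intro i j k hij hjk
      induction i using Fin.cases with
      | zero =>
        induction j using Fin.cases with
        | zero => exact absurd hij (lt_irrefl _)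
        | succ j' =>
          induction k using Fin.cases with
          | zero => exact absurd hjk (Fin.not_lt_zero _).elim
          | succ k' =>
            have hjk' : j' < k' := by rwa [Fin.succ_lt_succ_iff] at hjk
            simp only [Fin.cases_zero, Fin.cases_succ]
            have := hHcol (e (f' j')) (H.orderEmbOfFin_mem hHcard _)
              (e (f' k')) (H.orderEmbOfFin_mem hHcard _)
              (e.injective.ne (hf'mono.injective.ne (ne_of_lt hjk')))
            rw [Finset.map_insert, Finset.map_singleton] at this
            simpa using this
      | succ i' =>
        induction j using Fin.cases with
        | zero => exact absurd hij (Fin.not_lt_zero _).elim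
        | succ j' =>
          induction k using Fin.cases with
          | zero => exact absurd hjk (Fin.not_lt_zero _).elim
          | succ k' =>
            have hij' : i' < j' := by rwa [Fin.succ_lt_succ_iff] at hij
            have hjk' : j' < k' := by rwa [Fin.succ_lt_succ_iff] at hjk
            have := hc' i' j' k' hij' hjk'
            simp only [Fin.cases_succ]
            rw [← this]
            congr 1
            rw [Finset.map_insert, Finset.map_insert, Finset.map_singleton]
            rfl

lemma exists_ramsey3 (r : ℕ) : ∃ N : ℕ, RamseyProp N 3 4 r := by
  obtain ⟨N, hN⟩ := claim3 r (r + 3)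
  refine ⟨N, fun φ => ?_⟩
  obtain ⟨f, hf, c, hc⟩ := hN φ
  have key : ∃ i j : Fin (r + 3), i < j ∧ c i = c j ∧ (j : ℕ) < r + 1 := by
    obtain ⟨x, y, hxy, hcxy⟩ := Fintype.exists_ne_map_eq_of_card_lt
      (fun x : Fin (r + 1) => c (Fin.castLE (by omega) x)) (by simp)
    rcases lt_or_gt_of_ne hxy with h | h
    · exact ⟨Fin.castLE (by omega) x, Fin.castLE (by omega) y,
        by simpa only [Fin.lt_def, Fin.coe_castLE] using h, hcxy, y.isLt⟩
    · exact ⟨Fin.castLE (by omega) y, Fin.castLE (by omega) x,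
        by simpa only [Fin.lt_def, Fin.coe_castLE] using h, hcxy.symm, x.isLt⟩
  obtain ⟨i, j, hij, hcij, hjlt⟩ := key
  set k₁ : Fin (r + 3) := ⟨r + 1, by omega⟩ with hk₁
  set k₂ : Fin (r + 3) := ⟨r + 2, by omega⟩ with hk₂
  have hijv : (i : ℕ) < (j : ℕ) := hij
  have hjk₁ : j < k₁ := by simp only [Fin.lt_def, hk₁]; exact hjlt
  have hk₁k₂ : k₁ < k₂ := by simp [Fin.lt_def, hk₁, hk₂]
  have hik₁ : i < k₁ := lt_trans hij hjk₁
  have hjk₂ : j < k₂ := lt_trans hjk₁ hk₁k₂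
  have hik₂ : i < k₂ := lt_trans hik₁ hk₁k₂
  set I : Finset (Fin (r + 3)) := {i, j, k₁, k₂} with hI
  have hIcard : I.card = 4 := by
    rw [hI, Finset.card_insert_of_notMem, Finset.card_insert_of_notMem,
      Finset.card_insert_of_notMem, Finset.card_singleton]
    · simp only [Finset.mem_singleton]; exact ne_of_lt hk₁k₂
    · simp only [Finset.mem_insert, Finset.mem_singleton]; push_neg
      exact ⟨ne_of_lt hjk₁, ne_of_lt hjk₂⟩
    · simp only [Finset.mem_insert, Finset.mem_singleton]; push_neg
      exact ⟨ne_of_lt hij, ne_of_lt hik₁, ne_of_lt hik₂⟩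
  refine ⟨I.map ⟨f, hf.injective⟩, by simp [hIcard], c i, ?_⟩
  intro S hS hScard
  obtain ⟨I', hI'sub, rfl⟩ := Finset.subset_map_iff.mp hS
  have hI'card : I'.card = 3 := by simpa using hScard
  obtain ⟨p, q, t, hpq, hqt, rfl⟩ := sorted3 I' hI'card
  have hp : p ∈ I := hI'sub (by simp)
  have hq : q ∈ I := hI'sub (by simp)
  have ht : t ∈ I := hI'sub (by simp)
  have heval : Finset.map ⟨f, hf.injective⟩ {p, q, t} = {f p, f q, f t} := by
    rw [Finset.map_insert, Finset.map_insert, Finset.map_singleton]; rfl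
  rw [heval, hc p q t hpq hqt]
  simp only [hI, Finset.mem_insert, Finset.mem_singleton] at hp hq ht
  have hqv : (q : ℕ) = i ∨ (q : ℕ) = j ∨ (q : ℕ) = r + 1 ∨ (q : ℕ) = r + 2 := by
    rcases hq with rfl | rfl | rfl | rfl
    · exact Or.inl rfl
    · exact Or.inr (Or.inl rfl)
    · exact Or.inr (Or.inr (Or.inl rfl))
    · exact Or.inr (Or.inr (Or.inr rfl))
  have htv : (t : ℕ) = i ∨ (t : ℕ) = j ∨ (t : ℕ) = r + 1 ∨ (t : ℕ) = r + 2 := by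
    rcases ht with rfl | rfl | rfl | rfl
    · exact Or.inl rfl
    · exact Or.inr (Or.inl rfl)
    · exact Or.inr (Or.inr (Or.inl rfl))
    · exact Or.inr (Or.inr (Or.inr rfl))
  have hpqv : (p : ℕ) < (q : ℕ) := hpq
  have hqtv : (q : ℕ) < (t : ℕ) := hqt
  rcases hp with rfl | rfl | rfl | rfl
  · rfl
  · exact hcij.symm
  · exfalso
    have hpv : ((⟨r + 1, by omega⟩ : Fin (r + 3)) : ℕ) = r + 1 := rfl
    omega
  · exfalso
    have hpv : ((⟨r + 2, by omega⟩ : Fin (r + 3)) : ℕ) = r + 2 := rfl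
    omega

lemma ramsey_mono {N M k h r : ℕ} (hNM : N ≤ M) (hN : RamseyProp N k h r) :
    RamseyProp M k h r := by
  intro φ
  obtain ⟨H, hH, c, hc⟩ := hN (fun S => φ (S.map (Fin.castLEEmb hNM)))
  refine ⟨H.map (Fin.castLEEmb hNM), by simp [hH], c, ?_⟩
  intro S hS hcard
  obtain ⟨S₀, hS₀sub, rfl⟩ := Finset.subset_map_iff.mp hS
  exact hc S₀ hS₀sub (by simpa using hcard)

lemma triple_ext {n : ℕ} {u v w u' v' w' : Fin n} (h1 : u < v) (h2 : v < w)
    (h3 : u' < v') (h4 : v' < w') (he : ({u, v, w} : Finset (Fin n)) = {u', v', w'}) :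
    u = u' ∧ v = v' ∧ w = w' := by
  have min1 : ∀ x ∈ ({u, v, w} : Finset (Fin n)), u ≤ x := by
    intro x hx
    simp only [Finset.mem_insert, Finset.mem_singleton] at hx
    rcases hx with rfl | rfl | rfl
    · exact le_refl _
    · exact le_of_lt h1
    · exact le_of_lt (lt_trans h1 h2)
  have min2 : ∀ x ∈ ({u', v', w'} : Finset (Fin n)), u' ≤ x := by
    intro x hx
    simp only [Finset.mem_insert, Finset.mem_singleton] at hx
    rcases hx with rfl | rfl | rfl
    · exact le_refl _
    · exact le_of_lt h3
    · exact le_of_lt (lt_trans h3 h4)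
  have max1 : ∀ x ∈ ({u, v, w} : Finset (Fin n)), x ≤ w := by
    intro x hx
    simp only [Finset.mem_insert, Finset.mem_singleton] at hx
    rcases hx with rfl | rfl | rfl
    · exact le_of_lt (lt_trans h1 h2)
    · exact le_of_lt h2
    · exact le_refl _
  have max2 : ∀ x ∈ ({u', v', w'} : Finset (Fin n)), x ≤ w' := by
    intro x hx
    simp only [Finset.mem_insert, Finset.mem_singleton] at hx
    rcases hx with rfl | rfl | rfl
    · exact le_of_lt (lt_trans h3 h4)
    · exact le_of_lt h4
    · exact le_refl _
  have huu' : u = u' := by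
    refine le_antisymm (min1 u' ?_) (min2 u ?_)
    · rw [he]; simp
    · rw [← he]; simp
  have hww' : w = w' := by
    refine le_antisymm (max2 w ?_) (max1 w' ?_)
    · rw [← he]; simp
    · rw [he]; simp
  refine ⟨huu', ?_, hww'⟩
  have hv : v ∈ ({u', v', w'} : Finset (Fin n)) := by rw [← he]; simp
  simp only [Finset.mem_insert, Finset.mem_singleton] at hv
  rcases hv with rfl | rfl | rfl
  · exact absurd h1 (by rw [huu'] at h1; exact absurd h1 (lt_irrefl _))
  · rfl
  · exact absurd h2 (by rw [← hww'] at h2 ⊢; exact (lt_irrefl _ h2).elim)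

lemma tcard {n : ℕ} {x y z : Fin n} (h1 : x < y) (h2 : y < z) :
    ({x, y, z} : Finset (Fin n)).card = 3 := by
  rw [Finset.card_insert_of_notMem, Finset.card_insert_of_notMem, Finset.card_singleton]
  · simp only [Finset.mem_singleton]; exact ne_of_lt h2
  · simp only [Finset.mem_insert, Finset.mem_singleton]; push_neg
    exact ⟨ne_of_lt h1, ne_of_lt (lt_trans h1 h2)⟩

lemma no_realizer (s n : ℕ) (hs : 1 ≤ s) (hRam : RamseyProp n 3 4 (s * s)) (t : ℕ)
    (L : Fin t → PLE (P12 n)) (hL : IsLocalRealizer L)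
    (hmult : ∀ u : P12 n, ({i | u ∈ (L i).S} : Set (Fin t)).ncard ≤ s) : False := by
  classical
  have hss : 0 < s * s := Nat.mul_pos hs hs
  -- injections from the supports into Fin s
  have hgex : ∀ u : P12 n, ∃ g : Fin t → Fin s, Set.InjOn g {i | u ∈ (L i).S} := by
    intro u
    have hfin : ({i | u ∈ (L i).S} : Set (Fin t)).Finite := Set.toFinite _
    set A := hfin.toFinset with hA
    have hAcard : A.card ≤ s := by
      rw [hA, ← Set.ncard_eq_toFinset_card _ hfin]; exact hmult u
    refine ⟨fun i => if h : i ∈ A then Fin.castLE hAcard ((A.orderIsoOfFin rfl).symm ⟨i, h⟩)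
      else ⟨0, hs⟩, ?_⟩
    intro i₁ h₁ i₂ h₂ heq
    have m₁ : i₁ ∈ A := by rw [hA, Set.Finite.mem_toFinset]; exact h₁
    have m₂ : i₂ ∈ A := by rw [hA, Set.Finite.mem_toFinset]; exact h₂
    simp only [dif_pos m₁, dif_pos m₂] at heq
    have := (A.orderIsoOfFin rfl).symm.injective (Fin.castLE_injective hAcard heq)
    exact Subtype.ext_iff.mp this
  choose g hg using hgex
  obtain ⟨-, hrev⟩ := hL
  choose sel hsel using hrev
  -- the elements
  set pv : Fin n → P12 n := fun a => ⟨{a}, Or.inl (Finset.card_singleton a)⟩ with hpv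
  set pw : Fin n → Fin n → P12 n :=
    fun a b => if h : a = b then pv a else ⟨{a, b}, Or.inr (Finset.card_pair h)⟩ with hpw
  have leiff : ∀ x y : P12 n, x ≤ y ↔ x.1 ⊆ y.1 := fun x y => Iff.rfl
  have pwval : ∀ a b : Fin n, a ≠ b → (pw a b).1 = {a, b} := by
    intro a b h; rw [hpw]; simp [h]
  have hAB : ∀ u v w : Fin n, u < v → v < w → ¬ pv v ≤ pw u w ∧ ¬ pw u w ≤ pv v := by
    intro u v w huv hvw
    have huw : u ≠ w := ne_of_lt (lt_trans huv hvw)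
    constructor
    · intro hle
      have hv : v ∈ (pw u w).1 := (leiff _ _).mp hle (by rw [hpv]; exact Finset.mem_singleton_self v)
      rw [pwval u w huw] at hv
      simp only [Finset.mem_insert, Finset.mem_singleton] at hv
      rcases hv with rfl | rfl
      · exact absurd huv (lt_irrefl _)
      · exact absurd hvw (lt_irrefl _)
    · intro hle
      have hu : u ∈ (pv v).1 := by
        refine (leiff _ _).mp hle ?_
        rw [pwval u w huw]; simp
      rw [hpv] at hu
      simp only [Finset.mem_singleton] at hu
      rw [hu] at huv
      exact absurd huv (lt_irrefl _)
  -- the selector and coloring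
  set tri : Fin n → Fin n → Fin n → Fin (s * s) := fun u v w =>
    if h : u < v ∧ v < w then
      finProdFinEquiv
        (g (pv v) (sel (pv v) (pw u w) (hAB u v w h.1 h.2).1 (hAB u v w h.1 h.2).2),
         g (pw u w) (sel (pv v) (pw u w) (hAB u v w h.1 h.2).1 (hAB u v w h.1 h.2).2))
    else ⟨0, hss⟩ with htri
  set φ : Finset (Fin n) → Fin (s * s) := fun T =>
    if h : ∃ u v w : Fin n, u < v ∧ v < w ∧ T = {u, v, w} then
      tri h.choose h.choose_spec.choose h.choose_spec.choose_spec.choose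
    else ⟨0, hss⟩ with hφ
  have φeval : ∀ u v w : Fin n, u < v → v < w → φ {u, v, w} = tri u v w := by
    intro u v w h1 h2
    have hex : ∃ u' v' w' : Fin n, u' < v' ∧ v' < w' ∧
        ({u, v, w} : Finset (Fin n)) = {u', v', w'} := ⟨u, v, w, h1, h2, rfl⟩
    rw [hφ]
    simp only
    rw [dif_pos hex]
    have hspec := hex.choose_spec.choose_spec.choose_spec
    obtain ⟨e1, e2, e3⟩ := triple_ext h1 h2 hspec.1 hspec.2.1 hspec.2.2
    exact congr (congr (congrArg tri e1.symm) e2.symm) e3.symm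
  -- apply Ramsey
  obtain ⟨H, hH4, γ, hγ⟩ := hRam φ
  set e := H.orderEmbOfFin hH4 with he
  set a := e 0 with ha'
  set b := e 1 with hb'
  set c := e 2 with hc'
  set d := e 3 with hd'
  have hab : a < b := e.strictMono (by decide)
  have hbc : b < c := e.strictMono (by decide)
  have hcd : c < d := e.strictMono (by decide)
  have hac : a < c := lt_trans hab hbc
  have hbd : b < d := lt_trans hbc hcd
  have had : a < d := lt_trans hac hcd
  have hmem : ∀ i : Fin 4, e i ∈ H := fun i => H.orderEmbOfFin_mem hH4 i
  have hsub : ∀ x y z : Fin n, x ∈ H → y ∈ H → z ∈ H → ({x, y, z} : Finset (Fin n)) ⊆ H := by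
    intro x y z hx hy hz w hw
    simp only [Finset.mem_insert, Finset.mem_singleton] at hw
    rcases hw with rfl | rfl | rfl <;> assumption
  have t1 : tri a b c = γ := by
    rw [← φeval a b c hab hbc]
    exact hγ _ (hsub a b c (hmem 0) (hmem 1) (hmem 2)) (tcard hab hbc)
  have t2 : tri a b d = γ := by
    rw [← φeval a b d hab hbd]
    exact hγ _ (hsub a b d (hmem 0) (hmem 1) (hmem 3)) (tcard hab hbd)
  have t3 : tri a c d = γ := by
    rw [← φeval a c d hac hcd]
    exact hγ _ (hsub a c d (hmem 0) (hmem 2) (hmem 3)) (tcard hac hcd)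
  have t4 : tri b c d = γ := by
    rw [← φeval b c d hbc hcd]
    exact hγ _ (hsub b c d (hmem 1) (hmem 2) (hmem 3)) (tcard hbc hcd)
  -- unfold tri
  set i₁ := sel (pv b) (pw a c) (hAB a b c hab hbc).1 (hAB a b c hab hbc).2 with hi₁
  set i₂ := sel (pv b) (pw a d) (hAB a b d hab hbd).1 (hAB a b d hab hbd).2 with hi₂
  set i₃ := sel (pv c) (pw a d) (hAB a c d hac hcd).1 (hAB a c d hac hcd).2 with hi₃
  set i₄ := sel (pv c) (pw b d) (hAB b c d hbc hcd).1 (hAB b c d hbc hcd).2 with hi₄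
  have u1 : tri a b c = finProdFinEquiv (g (pv b) i₁, g (pw a c) i₁) := by
    rw [htri]; simp only; rw [dif_pos ⟨hab, hbc⟩]
  have u2 : tri a b d = finProdFinEquiv (g (pv b) i₂, g (pw a d) i₂) := by
    rw [htri]; simp only; rw [dif_pos ⟨hab, hbd⟩]
  have u3 : tri a c d = finProdFinEquiv (g (pv c) i₃, g (pw a d) i₃) := by
    rw [htri]; simp only; rw [dif_pos ⟨hac, hcd⟩]
  have u4 : tri b c d = finProdFinEquiv (g (pv c) i₄, g (pw b d) i₄) := by
    rw [htri]; simp only; rw [dif_pos ⟨hbc, hcd⟩]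
  -- relations and memberships
  have r1 : (L i₁).r (pw a c) (pv b) := hsel _ _ _ _
  have r2 : (L i₂).r (pw a d) (pv b) := hsel _ _ _ _
  have r3 : (L i₃).r (pw a d) (pv c) := hsel _ _ _ _
  have r4 : (L i₄).r (pw b d) (pv c) := hsel _ _ _ _
  have m1 := (L i₁).mem_of_rel _ _ r1
  have m2 := (L i₂).mem_of_rel _ _ r2
  have m3 := (L i₃).mem_of_rel _ _ r3
  have m4 := (L i₄).mem_of_rel _ _ r4
  -- equalities of indices
  have q12 : (g (pv b) i₁, g (pw a c) i₁) = (g (pv b) i₂, g (pw a d) i₂) :=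
    finProdFinEquiv.injective (by rw [← u1, ← u2, t1, t2])
  have q23 : (g (pv b) i₂, g (pw a d) i₂) = (g (pv c) i₃, g (pw a d) i₃) :=
    finProdFinEquiv.injective (by rw [← u2, ← u3, t2, t3])
  have q34 : (g (pv c) i₃, g (pw a d) i₃) = (g (pv c) i₄, g (pw b d) i₄) :=
    finProdFinEquiv.injective (by rw [← u3, ← u4, t3, t4])
  have e12 : i₁ = i₂ := hg (pv b) m1.2 m2.2 (congrArg Prod.fst q12)
  have e23 : i₂ = i₃ := hg (pw a d) m2.1 m3.1 (congrArg Prod.snd q23)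
  have e34 : i₃ = i₄ := hg (pv c) m3.2 m4.2 (congrArg Prod.fst q34)
  -- work inside the single ple X = L i₁
  rw [← e34, ← e23, ← e12] at r4 m4
  -- pv b ≤ pw b d and pv c ≤ pw a c
  have le1 : pv b ≤ pw b d := by
    rw [leiff, hpv, pwval b d (ne_of_lt hbd)]
    simp
  have le2 : pv c ≤ pw a c := by
    rw [leiff, hpv, pwval a c (ne_of_lt hac)]
    simp
  have E1 : (L i₁).r (pv b) (pw b d) := (L i₁).extends_le _ m1.2 _ m4.1 le1
  have E2 : (L i₁).r (pv c) (pw a c) := (L i₁).extends_le _ m4.2 _ m1.1 le2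
  have T1 : (L i₁).r (pw a c) (pw b d) := (L i₁).trans' _ _ _ r1 E1
  have T2 : (L i₁).r (pw b d) (pw a c) := (L i₁).trans' _ _ _ r4 E2
  have heq : pw a c = pw b d := (L i₁).antisymm' _ _ T1 T2
  have hval : ({a, c} : Finset (Fin n)) = {b, d} := by
    rw [← pwval a c (ne_of_lt hac), ← pwval b d (ne_of_lt hbd), heq]
  have hbmem : b ∈ ({a, c} : Finset (Fin n)) := by rw [hval]; simp
  simp only [Finset.mem_insert, Finset.mem_singleton] at hbmem
  rcases hbmem with h | h
  · rw [h] at hab; exact lt_irrefl _ hab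
  · rw [h] at hbc; exact lt_irrefl _ hbc

lemma exists_realizer (α : Type*) [PartialOrder α] [Finite α] :
    ∃ k, 0 < k ∧ ∃ (t : ℕ) (L : Fin t → PLE α), IsLocalRealizer L ∧
      ∀ u : α, ({i | u ∈ (L i).S} : Set (Fin t)).ncard ≤ k := by
  classical
  cases nonempty_fintype α
  obtain ⟨le', hlin, hext⟩ := extend_partialOrder ((· ≤ ·) : α → α → Prop)
  haveI := hlin
  let full : PLE α :=
    { S := Set.univ
      r := le'
      mem_of_rel := fun x y _ => ⟨trivial, trivial⟩
      refl := fun x _ => refl_of le' x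
      antisymm' := fun x y h1 h2 => antisymm_of le' h1 h2
      trans' := fun x y z h1 h2 => trans_of le' h1 h2
      total := fun x _ y _ => total_of le' x y
      extends_le := fun x _ y _ h => hext x y h }
  let emptyPLE : PLE α :=
    { S := ∅
      r := fun _ _ => False
      mem_of_rel := fun x y h => h.elim
      refl := fun x hx => hx.elim
      antisymm' := fun x y h => h.elim
      trans' := fun x y z h => h.elim
      total := fun x hx => hx.elim
      extends_le := fun x hx => hx.elim }
  let rev : α × α → PLE α := fun p =>
    if h : ¬ p.1 ≤ p.2 ∧ ¬ p.2 ≤ p.1 then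
      { S := {p.1, p.2}
        r := fun a b => (a = p.2 ∧ b = p.1) ∨ (a = p.1 ∧ b = p.1) ∨ (a = p.2 ∧ b = p.2)
        mem_of_rel := by
          rintro x y (⟨rfl, rfl⟩ | ⟨rfl, rfl⟩ | ⟨rfl, rfl⟩) <;>
            exact ⟨by simp, by simp⟩
        refl := by
          rintro x (rfl | rfl)
          · exact Or.inr (Or.inl ⟨rfl, rfl⟩)
          · exact Or.inr (Or.inr ⟨rfl, rfl⟩)
        antisymm' := by
          rintro x y (⟨rfl, rfl⟩ | ⟨rfl, rfl⟩ | ⟨rfl, rfl⟩) h2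
          · rcases h2 with h2 | h2 | h2
            · exact h2.2
            · exact h2.2
            · exact h2.1.symm
          · rfl
          · rfl
        trans' := by
          have hne : p.1 ≠ p.2 := fun he => h.1 (he ▸ le_refl _)
          rintro x y z h1 h2
          rcases h1 with ⟨rfl, rfl⟩ | ⟨rfl, rfl⟩ | ⟨rfl, rfl⟩
          · rcases h2 with ⟨h2a, rfl⟩ | ⟨h2a, rfl⟩ | ⟨h2a, rfl⟩
            · exact (hne h2a).elim
            · exact Or.inl ⟨rfl, rfl⟩
            · exact (hne h2a).elim
          · exact h2
          · exact h2
        total := by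
          rintro x (rfl | rfl) y (rfl | rfl)
          · exact Or.inl (Or.inr (Or.inl ⟨rfl, rfl⟩))
          · exact Or.inr (Or.inl ⟨rfl, rfl⟩)
          · exact Or.inl (Or.inl ⟨rfl, rfl⟩)
          · exact Or.inl (Or.inr (Or.inr ⟨rfl, rfl⟩))
        extends_le := by
          rintro x (rfl | rfl) y (rfl | rfl) hle
          · exact Or.inr (Or.inl ⟨rfl, rfl⟩)
          · exact absurd hle h.1
          · exact Or.inl ⟨rfl, rfl⟩
          · exact Or.inr (Or.inr ⟨rfl, rfl⟩) }
    else emptyPLE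
  set m := Fintype.card (Option (α × α)) with hm
  set eqv : Fin m ≃ Option (α × α) := (Fintype.equivFin (Option (α × α))).symm with heqv
  set L : Fin m → PLE α := fun i => Option.elim (eqv i) full rev with hLdef
  refine ⟨m, by rw [hm]; simp [Fintype.card_option], m, L, ⟨?_, ?_⟩, ?_⟩
  · intro x y hxy
    refine ⟨eqv.symm none, ?_⟩
    rw [hLdef]
    simp only [Equiv.apply_symm_apply, Option.elim]
    exact ⟨trivial, trivial⟩
  · intro x y h1 h2
    refine ⟨eqv.symm (some (x, y)), ?_⟩
    rw [hLdef]
    simp only [Equiv.apply_symm_apply, Option.elim]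
    show (rev (x, y)).r y x
    rw [show rev (x, y) = _ from dif_pos (⟨h1, h2⟩ : ¬ (x,y).1 ≤ (x,y).2 ∧ ¬ (x,y).2 ≤ (x,y).1)]
    exact Or.inl ⟨rfl, rfl⟩
  · intro u
    calc ({i | u ∈ (L i).S} : Set (Fin m)).ncard
        ≤ (Set.univ : Set (Fin m)).ncard :=
          Set.ncard_le_ncard (Set.subset_univ _) Set.finite_univ
      _ = m := by rw [Set.ncard_univ]; simp

/-- For every `s ≥ 1`, if `n ≥ Ram(3,4;s²)` then `ldim P(1,2;n) > s`. -/
theorem ldim_P12_gt (s : ℕ) (hs : 1 ≤ s) (n : ℕ) (hn : Ram 3 4 (s * s) ≤ n) :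
    s < ldim (P12 n) := by
  classical
  have hne : {N | RamseyProp N 3 4 (s * s)}.Nonempty := exists_ramsey3 (s * s)
  have hmem : RamseyProp (Ram 3 4 (s * s)) 3 4 (s * s) := Nat.sInf_mem hne
  have hRam : RamseyProp n 3 4 (s * s) := ramsey_mono hn hmem
  haveI : Finite (P12 n) := by unfold P12; infer_instance
  obtain ⟨k, hk⟩ := exists_realizer (P12 n)
  have hK : {k | 0 < k ∧ ∃ (t : ℕ) (L : Fin t → PLE (P12 n)),
      IsLocalRealizer L ∧ ∀ u : P12 n,
        ({i | u ∈ (L i).S} : Set (Fin t)).ncard ≤ k}.Nonempty := ⟨k, hk⟩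
  obtain ⟨hpos, t, L, hreal, hmult⟩ := Nat.sInf_mem hK
  by_contra hcon
  push_neg at hcon
  exact no_realizer s n hs hRam t L hreal (fun u => le_trans (hmult u) hcon)
end

section
/- For every s ≥ 1, if n ≥ Ram(4,7;s²) then the canonical interval order I_n has local dimension greater than s. -/
/-- The canonical interval order `I_n`: closed intervals `[i,j]` with `i < j`,
where `[i,j] < [k,l]` iff `j < k`. -/
def CIO (n : ℕ) := {p : Fin n × Fin n // p.1 < p.2}

instance (n : ℕ) : PartialOrder (CIO n) where
  le x y := x = y ∨ x.val.2 < y.val.1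
  le_refl x := Or.inl rfl
  le_trans := by
    rintro x y z (rfl | h) (rfl | h')
    · exact Or.inl rfl
    · exact Or.inr h'
    · exact Or.inr h
    · exact Or.inr (h.trans (y.prop.trans h'))
  le_antisymm := by
    rintro x y (rfl | h) (h' | h'')
    · rfl
    · rfl
    · subst h'; exact absurd (h.trans y.prop) (lt_irrefl _)
    · exact absurd (h.trans (y.prop.trans (h''.trans x.prop))) (lt_irrefl _)


open Finset

theorem ramsey_seq {α : Type*} [DecidableEq α] (k r : ℕ)
    (IH : ∀ h' : ℕ, ∃ N, ∀ (A : Finset α) (φ : Finset α → Fin r), N ≤ A.card →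
      ∃ H, H ⊆ A ∧ H.card = h' ∧ ∃ c, ∀ S ⊆ H, S.card = k → φ S = c)
    (m : ℕ) :
    ∃ N, ∀ (A : Finset α) (φ : Finset α → Fin r), N ≤ A.card →
      ∃ (a : Fin m → α) (col : Fin m → Fin r),
        Function.Injective a ∧ (∀ i, a i ∈ A) ∧
        ∀ (i : Fin m) (T : Finset (Fin m)), (∀ j ∈ T, i < j) → T.card = k →
          φ (insert (a i) (T.image a)) = col i := by
  classical
  induction m with
  | zero =>
    refine ⟨0, fun A φ _ => ⟨Fin.elim0, Fin.elim0, ?_, fun i => i.elim0, fun i => i.elim0⟩⟩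
    intro i; exact i.elim0
  | succ m ihm =>
    obtain ⟨M, hM⟩ := ihm
    obtain ⟨R, hR⟩ := IH M
    refine ⟨R + 1, fun A φ hA => ?_⟩
    have hAne : A.Nonempty := card_pos.mp (by omega)
    obtain ⟨a0, ha0⟩ := hAne
    have hA' : R ≤ (A.erase a0).card := by
      rw [card_erase_of_mem ha0]; omega
    obtain ⟨H, hHA, hHcard, c0, hc0⟩ := hR (A.erase a0) (fun S => φ (insert a0 S)) hA'
    obtain ⟨a', col', hinj', hmem', hprop'⟩ := hM H φ (le_of_eq hHcard.symm)
    have ha'H : ∀ j, a' j ∈ H := hmem'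
    have ha'ne : ∀ j, a' j ≠ a0 := fun j => (mem_erase.mp (hHA (ha'H j))).1
    have hinj : Function.Injective (Fin.cons a0 a' : Fin (m+1) → α) := by
      intro i j hij
      induction i using Fin.cases with
      | zero =>
        induction j using Fin.cases with
        | zero => rfl
        | succ j =>
          simp only [Fin.cons_zero, Fin.cons_succ] at hij
          exact absurd hij.symm (ha'ne j)
      | succ i =>
        induction j using Fin.cases with
        | zero =>
          simp only [Fin.cons_zero, Fin.cons_succ] at hij
          exact absurd hij (ha'ne i)
        | succ j =>
          simp only [Fin.cons_succ] at hij
          exact congrArg Fin.succ (hinj' hij)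
    refine ⟨Fin.cons a0 a', Fin.cons c0 col', hinj, ?_, ?_⟩
    · intro i
      induction i using Fin.cases with
      | zero => simpa using ha0
      | succ i =>
        simp only [Fin.cons_succ]
        exact (mem_erase.mp (hHA (ha'H i))).2
    · intro i T hT hTcard
      induction i using Fin.cases with
      | zero =>
        have himg : T.image (Fin.cons a0 a') ⊆ H := by
          intro x hx
          obtain ⟨j, hj, rfl⟩ := mem_image.mp hx
          have hj0 : j ≠ 0 := Fin.pos_iff_ne_zero.mp (hT j hj)
          obtain ⟨j', rfl⟩ := Fin.exists_succ_eq.mpr hj0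
          rw [Fin.cons_succ]
          exact ha'H j'
        have hcard : (T.image (Fin.cons a0 a')).card = k := by
          rw [card_image_of_injective _ hinj, hTcard]
        have := hc0 _ himg hcard
        rw [Fin.cons_zero]
        exact this
      | succ i =>
        set T' : Finset (Fin m) := T.preimage Fin.succ (Fin.succ_injective m).injOn with hT'def
        have hTeq : T = T'.image Fin.succ := by
          ext j
          constructor
          · intro hj
            have hj0 : j ≠ 0 := Fin.pos_iff_ne_zero.mp (lt_trans (Fin.succ_pos i) (hT j hj))
            obtain ⟨j', rfl⟩ := Fin.exists_succ_eq.mpr hj0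
            exact mem_image_of_mem _ (mem_preimage.mpr hj)
          · intro hj
            obtain ⟨j', hj', rfl⟩ := mem_image.mp hj
            exact mem_preimage.mp hj'
        have himgeq : T.image (Fin.cons a0 a') = T'.image a' := by
          rw [hTeq, image_image]
          exact image_congr (fun j _ => by simp)
        have hlt' : ∀ j ∈ T', i < j := by
          intro j hj
          have := hT _ (mem_preimage.mp hj)
          exact Fin.succ_lt_succ_iff.mp this
        have hcard' : T'.card = k := by
          have : (T'.image Fin.succ).card = T'.card :=
            card_image_of_injective _ (Fin.succ_injective m)
          rw [hTeq] at hTcard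
          omega
        have := hprop' i T' hlt' hcard'
        rw [Fin.cons_succ, Fin.cons_succ, himgeq]
        exact this

/-- Finite hypergraph Ramsey theorem on an arbitrary type. -/
theorem ramsey_exists {α : Type*} [DecidableEq α] (r k : ℕ) :
    ∀ h : ℕ, ∃ N, ∀ (A : Finset α) (φ : Finset α → Fin r), N ≤ A.card →
      ∃ H, H ⊆ A ∧ H.card = h ∧ ∃ c, ∀ S ⊆ H, S.card = k → φ S = c := by
  classical
  induction k with
  | zero =>
    intro h
    refine ⟨h, fun A φ hA => ?_⟩
    obtain ⟨H, hHA, hHcard⟩ := exists_subset_card_eq hA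
    refine ⟨H, hHA, hHcard, φ ∅, fun S _ hS => ?_⟩
    rw [card_eq_zero.mp hS]
  | succ k IH =>
    intro h
    rcases Nat.eq_zero_or_pos r with hr | hr
    · subst hr
      refine ⟨h, fun A φ hA => ?_⟩
      obtain ⟨H, hHA, hHcard⟩ := exists_subset_card_eq hA
      exact ⟨H, hHA, hHcard, φ ∅, fun S _ _ => (φ S).elim0⟩
    · obtain ⟨N, hN⟩ := ramsey_seq k r IH (r * h + 1)
      refine ⟨N, fun A φ hA => ?_⟩
      obtain ⟨a, col, hinj, hmem, hprop⟩ := hN A φ hA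
      -- pigeonhole
      have hpig : ∃ y ∈ (univ : Finset (Fin r)), h <
          (univ.filter (fun i : Fin (r*h+1) => col i = y)).card := by
        apply exists_lt_card_fiber_of_mul_lt_card_of_maps_to
        · intro i _; exact mem_univ _
        · simp [card_univ]
      obtain ⟨y, _, hy⟩ := hpig
      obtain ⟨I, hI, hIcard⟩ := exists_subset_card_eq (le_of_lt hy)
      refine ⟨I.image a, ?_, ?_, y, ?_⟩
      · intro x hx
        obtain ⟨i, _, rfl⟩ := mem_image.mp hx
        exact hmem i
      · rw [card_image_of_injective _ hinj, hIcard]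
      · intro S hS hScard
        set T : Finset (Fin (r*h+1)) := S.preimage a hinj.injOn with hTdef
        have hTI : T ⊆ I := by
          intro j hj
          have : a j ∈ S := mem_preimage.mp hj
          obtain ⟨j', hj', hj'eq⟩ := mem_image.mp (hS this)
          rwa [← hinj hj'eq]
        have hTeq : T.image a = S := by
          ext x
          constructor
          · intro hx
            obtain ⟨j, hj, rfl⟩ := mem_image.mp hx
            exact mem_preimage.mp hj
          · intro hx
            obtain ⟨j, hj, rfl⟩ := mem_image.mp (hS hx)
            exact mem_image_of_mem _ (mem_preimage.mpr hx)
        have hTcard : T.card = k + 1 := by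
          rw [← hTeq, card_image_of_injective _ hinj] at hScard
          exact hScard
        have hTne : T.Nonempty := card_pos.mp (by omega)
        set i0 := T.min' hTne with hi0
        have hi0T : i0 ∈ T := T.min'_mem hTne
        have hT' : ∀ j ∈ T.erase i0, i0 < j := fun j hj =>
          lt_of_le_of_ne (T.min'_le j (mem_erase.mp hj).2) (Ne.symm (mem_erase.mp hj).1)
        have hT'card : (T.erase i0).card = k := by
          rw [card_erase_of_mem hi0T, hTcard]
          omega
        have hcol : col i0 = y := by
          have := hI (hTI hi0T)
          simpa using this
        have := hprop i0 (T.erase i0) hT' hT'card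
        rw [hcol] at this
        rw [← hTeq, ← this]
        congr 1
        rw [← image_insert, insert_erase hi0T]



theorem ramseyProp_mono {N n k h r : ℕ} (hR : RamseyProp N k h r) (hNn : N ≤ n) :
    RamseyProp n k h r := by
  classical
  intro φ
  set g : Fin N ↪ Fin n := Fin.castLEEmb hNn with hg
  obtain ⟨H, hHcard, c, hc⟩ := hR (fun T => φ (T.map g))
  refine ⟨H.map g, by simp [hHcard], c, ?_⟩
  intro S hS hScard
  set T : Finset (Fin N) := S.preimage g g.injective.injOn with hT
  have hTS : T.map g = S := by
    ext x
    simp only [Finset.mem_map, Finset.mem_preimage, hT]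
    constructor
    · rintro ⟨y, hy, rfl⟩; exact hy
    · intro hx
      obtain ⟨y, _, rfl⟩ := Finset.mem_map.mp (hS hx)
      exact ⟨y, hx, rfl⟩
  have hTH : T ⊆ H := by
    intro j hj
    have : g j ∈ S := Finset.mem_preimage.mp hj
    obtain ⟨j', hj', hj'eq⟩ := Finset.mem_map.mp (hS this)
    rwa [← g.injective hj'eq]
  have hTcard : T.card = k := by
    have := Finset.card_map g (s := T)
    rw [hTS] at this
    omega
  rw [← hTS]
  exact hc T hTH hTcard

theorem ramseyProp_exists (k h r : ℕ) : ∃ N, RamseyProp N k h r := by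
  classical
  obtain ⟨N, hN⟩ := ramsey_exists (α := ℕ) r k h
  refine ⟨N + h, ?_⟩
  intro φ
  have hbound : ∀ m ∈ Finset.range (N + h), m < N + h := fun m hm => Finset.mem_range.mp hm
  set ψ : Finset ℕ → Fin r := fun T =>
    if hT : ∀ m ∈ T, m < N + h then φ (T.attachFin hT) else φ ∅ with hψ
  obtain ⟨H, hHsub, hHcard, c, hc⟩ := hN (Finset.range (N + h)) ψ (by simp)
  have hHb : ∀ m ∈ H, m < N + h := fun m hm => Finset.mem_range.mp (hHsub hm)
  refine ⟨H.attachFin hHb, by rw [Finset.card_attachFin, hHcard], c, ?_⟩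
  intro S hS hScard
  set T : Finset ℕ := S.image Fin.val with hT
  have hTb : ∀ m ∈ T, m < N + h := by
    intro m hm
    obtain ⟨x, _, rfl⟩ := Finset.mem_image.mp hm
    exact x.isLt
  have hTeq : T.attachFin hTb = S := by
    ext x
    rw [Finset.mem_attachFin, hT, Finset.mem_image]
    constructor
    · rintro ⟨y, hy, hxy⟩; rwa [← Fin.val_injective hxy]
    · intro hx; exact ⟨x, hx, rfl⟩
  have hTH : T ⊆ H := by
    intro m hm
    obtain ⟨x, hx, rfl⟩ := Finset.mem_image.mp hm
    have := hS hx
    exact (Finset.mem_attachFin hHb).mp this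
  have hTcard : T.card = k := by
    rw [hT, Finset.card_image_of_injective _ Fin.val_injective, hScard]
  have := hc T hTH hTcard
  rw [hψ] at this
  simp only [dif_pos hTb] at this
  rwa [hTeq] at this

theorem ramseyProp_of_le {k h r n : ℕ} (hn : Ram k h r ≤ n) : RamseyProp n k h r := by
  obtain ⟨N, hN⟩ := ramseyProp_exists k h r
  have hmem : Ram k h r ∈ {N | RamseyProp N k h r} := Nat.sInf_mem ⟨N, hN⟩
  exact ramseyProp_mono hmem hn



section Aux

lemma quad_eq {n : ℕ} {a b c d a' b' c' d' : Fin n}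
    (h1 : a < b) (h2 : b < c) (h3 : c < d)
    (h1' : a' < b') (h2' : b' < c') (h3' : c' < d')
    (h : ({a, b, c, d} : Finset (Fin n)) = {a', b', c', d'}) :
    a = a' ∧ b = b' ∧ c = c' ∧ d = d' := by
  have hm := Finset.ext_iff.mp h
  simp only [Finset.mem_insert, Finset.mem_singleton] at hm
  have ha : a = a' ∨ a = b' ∨ a = c' ∨ a = d' := (hm a).mp (Or.inl rfl)
  have ha' : a' = a ∨ a' = b ∨ a' = c ∨ a' = d := by
    have := (hm a').mpr (Or.inl rfl); tauto
  have ea : a = a' := by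
    have p1 : a' ≤ a := by
      rcases ha with rfl | rfl | rfl | rfl
      exacts [le_rfl, h1'.le, (h1'.trans h2').le, ((h1'.trans h2').trans h3').le]
    have p2 : a ≤ a' := by
      rcases ha' with rfl | rfl | rfl | rfl
      exacts [le_rfl, h1.le, (h1.trans h2).le, ((h1.trans h2).trans h3).le]
    exact le_antisymm p2 p1
  subst ea
  have hb : b = b' ∨ b = c' ∨ b = d' := by
    have := (hm b).mp (Or.inr (Or.inl rfl))
    rcases this with e | h'
    · exact absurd (e ▸ h1) (lt_irrefl _)
    · exact h'
  have hb' : b' = b ∨ b' = c ∨ b' = d := by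
    have := (hm b').mpr (Or.inr (Or.inl rfl))
    rcases this with e | h'
    · exact absurd (e ▸ h1') (lt_irrefl _)
    · exact h'
  have eb : b = b' := by
    have p1 : b' ≤ b := by
      rcases hb with rfl | rfl | rfl
      exacts [le_rfl, h2'.le, (h2'.trans h3').le]
    have p2 : b ≤ b' := by
      rcases hb' with rfl | rfl | rfl
      exacts [le_rfl, h2.le, (h2.trans h3).le]
    exact le_antisymm p2 p1
  subst eb
  have hc : c = c' ∨ c = d' := by
    have := (hm c).mp (Or.inr (Or.inr (Or.inl rfl)))
    rcases this with e | e | h'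
    · exact absurd (e ▸ (h1.trans h2)) (lt_irrefl _)
    · exact absurd (e ▸ h2) (lt_irrefl _)
    · exact h'
  have hc' : c' = c ∨ c' = d := by
    have := (hm c').mpr (Or.inr (Or.inr (Or.inl rfl)))
    rcases this with e | e | h'
    · exact absurd (e ▸ (h1'.trans h2')) (lt_irrefl _)
    · exact absurd (e ▸ h2') (lt_irrefl _)
    · exact h'
  have ec : c = c' := by
    have p1 : c' ≤ c := by
      rcases hc with rfl | rfl
      exacts [le_rfl, h3'.le]
    have p2 : c ≤ c' := by
      rcases hc' with rfl | rfl
      exacts [le_rfl, h3.le]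
    exact le_antisymm p2 p1
  subst ec
  have hd : d = d' := by
    have := (hm d).mp (Or.inr (Or.inr (Or.inr rfl)))
    rcases this with e | e | e | h'
    · exact absurd (e ▸ (h1.trans (h2.trans h3))) (lt_irrefl _)
    · exact absurd (e ▸ (h2.trans h3)) (lt_irrefl _)
    · exact absurd (e ▸ h3) (lt_irrefl _)
    · exact h'
  exact ⟨rfl, rfl, rfl, hd⟩

lemma quad_card {n : ℕ} {a b c d : Fin n} (h1 : a < b) (h2 : b < c) (h3 : c < d) :
    ({a, b, c, d} : Finset (Fin n)).card = 4 := by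
  rw [Finset.card_insert_of_notMem, Finset.card_insert_of_notMem,
    Finset.card_insert_of_notMem, Finset.card_singleton]
  · simp only [Finset.mem_singleton]
    exact h3.ne
  · simp only [Finset.mem_insert, Finset.mem_singleton]
    push_neg
    exact ⟨h2.ne, (h2.trans h3).ne⟩
  · simp only [Finset.mem_insert, Finset.mem_singleton]
    push_neg
    exact ⟨h1.ne, (h1.trans h2).ne, (h1.trans (h2.trans h3)).ne⟩

lemma enc_inj {s a b a' b' : ℕ} (hb : b < s) (hb' : b' < s)
    (h : a * s + b = a' * s + b') : a = a' ∧ b = b' := by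
  have hs : 0 < s := lt_of_le_of_lt (Nat.zero_le b) hb
  have d1 : (b + a * s) / s = a := by
    rw [Nat.add_mul_div_right _ _ hs, Nat.div_eq_of_lt hb, Nat.zero_add]
  have d2 : (b' + a' * s) / s = a' := by
    rw [Nat.add_mul_div_right _ _ hs, Nat.div_eq_of_lt hb', Nat.zero_add]
  have h2 : b + a * s = b' + a' * s := by omega
  have hea : a = a' := by rw [← d1, ← d2, h2]
  subst hea
  exact ⟨rfl, by omega⟩

/-- A two-element partial linear extension reversing the pair if incomparable. -/
def pairPLE {α : Type*} [PartialOrder α] (x y : α) : PLE α where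
  S := {x, y}
  r := fun a b =>
    (a = b ∧ (a = x ∨ a = y)) ∨ (a = x ∧ b = y ∧ x ≤ y) ∨ (a = y ∧ b = x ∧ ¬ x ≤ y)
  mem_of_rel := by
    rintro a b (⟨rfl, h | h⟩ | ⟨rfl, rfl, h⟩ | ⟨rfl, rfl, h⟩) <;>
      simp [h, Set.mem_insert_iff]
  refl := by
    intro a ha
    rcases ha with ha | ha
    · exact Or.inl ⟨rfl, Or.inl ha⟩
    · exact Or.inl ⟨rfl, Or.inr ha⟩
  antisymm' := by
    rintro a b (⟨rfl, h⟩ | ⟨rfl, rfl, h⟩ | ⟨rfl, rfl, h⟩) hba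
    · rfl
    · rcases hba with ⟨e, _⟩ | ⟨e, _, _⟩ | ⟨_, _, hn⟩
      · exact e.symm
      · exact e.symm
      · exact absurd h hn
    · rcases hba with ⟨e, _⟩ | ⟨_, _, hxy⟩ | ⟨_, e2, _⟩
      · exact e.symm
      · exact absurd hxy h
      · exact e2
  trans' := by
    rintro a b c (⟨rfl, h⟩ | ⟨rfl, rfl, h⟩ | ⟨rfl, rfl, h⟩) hbc
    · exact hbc
    · rcases hbc with ⟨rfl, _⟩ | ⟨_, rfl, _⟩ | ⟨_, rfl, _⟩
      · exact Or.inr (Or.inl ⟨rfl, rfl, h⟩)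
      · exact Or.inr (Or.inl ⟨rfl, rfl, h⟩)
      · exact Or.inl ⟨rfl, Or.inl rfl⟩
    · rcases hbc with ⟨rfl, _⟩ | ⟨_, rfl, _⟩ | ⟨_, rfl, _⟩
      · exact Or.inr (Or.inr ⟨rfl, rfl, h⟩)
      · exact Or.inl ⟨rfl, Or.inr rfl⟩
      · exact Or.inr (Or.inr ⟨rfl, rfl, h⟩)
  total := by
    intro a ha b hb
    rcases ha with rfl | rfl <;> rcases hb with rfl | rfl
    · exact Or.inl (Or.inl ⟨rfl, Or.inl rfl⟩)
    · by_cases h : a ≤ b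
      · exact Or.inl (Or.inr (Or.inl ⟨rfl, rfl, h⟩))
      · exact Or.inr (Or.inr (Or.inr ⟨rfl, rfl, h⟩))
    · by_cases h : b ≤ a
      · exact Or.inr (Or.inr (Or.inl ⟨rfl, rfl, h⟩))
      · exact Or.inl (Or.inr (Or.inr ⟨rfl, rfl, h⟩))
    · exact Or.inl (Or.inl ⟨rfl, Or.inr rfl⟩)
  extends_le := by
    intro a ha b hb hab
    rcases ha with rfl | rfl <;> rcases hb with rfl | rfl
    · exact Or.inl ⟨rfl, Or.inl rfl⟩
    · exact Or.inr (Or.inl ⟨rfl, rfl, hab⟩)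
    · by_cases hxy : b ≤ a
      · have e : b = a := le_antisymm hxy hab
        exact Or.inl ⟨e.symm, Or.inr rfl⟩
      · exact Or.inr (Or.inr ⟨rfl, rfl, hxy⟩)
    · exact Or.inl ⟨rfl, Or.inr rfl⟩

/-- Every finite poset admits a local realizer (with some bound). -/
lemma ldim_set_nonempty (α : Type*) [PartialOrder α] [Fintype α] :
    Set.Nonempty {k | 0 < k ∧ ∃ (t : ℕ) (L : Fin t → PLE α),
      IsLocalRealizer L ∧ ∀ u : α, ({i | u ∈ (L i).S} : Set (Fin t)).ncard ≤ k} := by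
  classical
  set t := Fintype.card (α × α) with ht
  set e : Fin t ≃ (α × α) := (Fintype.equivFin (α × α)).symm with he
  refine ⟨t + 1, Nat.succ_pos _, t, fun i => pairPLE (e i).1 (e i).2, ⟨?_, ?_⟩, ?_⟩
  · intro x y _
    refine ⟨e.symm (x, y), ?_, ?_⟩
    · show x ∈ (pairPLE (e (e.symm (x, y))).1 (e (e.symm (x, y))).2).S
      rw [e.apply_symm_apply]
      exact Or.inl rfl
    · show y ∈ (pairPLE (e (e.symm (x, y))).1 (e (e.symm (x, y))).2).S
      rw [e.apply_symm_apply]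
      exact Or.inr rfl
  · intro x y hxy hyx
    refine ⟨e.symm (x, y), ?_⟩
    show (pairPLE (e (e.symm (x, y))).1 (e (e.symm (x, y))).2).r y x
    rw [e.apply_symm_apply]
    exact Or.inr (Or.inr ⟨rfl, rfl, hxy⟩)
  · intro u
    have h1 : ({i | u ∈ (pairPLE (e i).1 (e i).2).S} : Set (Fin t)).ncard
        ≤ (Set.univ : Set (Fin t)).ncard :=
      Set.ncard_le_ncard (Set.subset_univ _) Set.finite_univ
    have h2 : (Set.univ : Set (Fin t)).ncard = t := by
      rw [Set.ncard_univ]; simp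
    rw [h2] at h1
    exact h1.trans (Nat.le_succ t)

instance (n : ℕ) : Fintype (CIO n) := by unfold CIO; infer_instance

/-- The core contradiction. -/
theorem main_contra {n s t : ℕ} (hs : 1 ≤ s) (hram : RamseyProp n 4 7 (s * s))
    (L : Fin t → PLE (CIO n)) (hreal : IsLocalRealizer L)
    (hb : ∀ u : CIO n, ({i | u ∈ (L i).S} : Set (Fin t)).ncard ≤ s) : False := by
  classical
  set Su : CIO n → Finset (Fin t) :=
    fun u => Finset.univ.filter (fun i => u ∈ (L i).S) with hSu
  have hSucard : ∀ u, (Su u).card ≤ s := by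
    intro u
    have hcoe : ((Su u : Finset (Fin t)) : Set (Fin t)) = {i | u ∈ (L i).S} := by
      ext i; simp [hSu]
    have h2 := hb u
    rw [← hcoe, Set.ncard_coe_finset] at h2
    exact h2
  set rk : Fin t → CIO n → ℕ :=
    fun i u => ((Su u).filter (fun j => j < i)).card with hrk
  have hrk_lt : ∀ i u, i ∈ Su u → rk i u < s := by
    intro i u hi
    have hsub : (Su u).filter (fun j => j < i) ⊆ (Su u).erase i := by
      intro j hj
      rcases Finset.mem_filter.mp hj with ⟨hjS, hji⟩
      exact Finset.mem_erase.mpr ⟨ne_of_lt hji, hjS⟩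
    have h1 := Finset.card_le_card hsub
    rw [Finset.card_erase_of_mem hi] at h1
    have h2 := hSucard u
    have h3 : 0 < (Su u).card := Finset.card_pos.mpr ⟨i, hi⟩
    simp only [hrk]
    omega
  have hrk_mono : ∀ u i j, i ∈ Su u → i < j → rk i u < rk j u := by
    intro u i j hi hij
    have hsub : (Su u).filter (fun k => k < i) ⊆ (Su u).filter (fun k => k < j) := by
      intro k hk
      rcases Finset.mem_filter.mp hk with ⟨hkS, hki⟩
      exact Finset.mem_filter.mpr ⟨hkS, hki.trans hij⟩
    apply Finset.card_lt_card
    rw [Finset.ssubset_iff_of_subset hsub]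
    refine ⟨i, Finset.mem_filter.mpr ⟨hi, hij⟩, fun hcon => ?_⟩
    exact absurd (Finset.mem_filter.mp hcon).2 (lt_irrefl i)
  have hrk_inj : ∀ u i j, i ∈ Su u → j ∈ Su u → rk i u = rk j u → i = j := by
    intro u i j hi hj he
    by_contra hne
    rcases lt_or_gt_of_ne hne with h | h
    · exact absurd he (ne_of_lt (hrk_mono u i j hi h))
    · exact absurd he.symm (ne_of_lt (hrk_mono u j i hj h))
  -- choose a coloring
  have key : ∀ Q : Finset (Fin n), ∃ m : Fin (s * s), ∀ a b c d : Fin n,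
      a < b → b < c → c < d → Q = {a, b, c, d} → ∀ u v : CIO n,
      u.val = (a, c) → v.val = (b, d) →
      ∃ i, (L i).r v u ∧ m.val = rk i u * s + rk i v := by
    intro Q
    by_cases hQ : ∃ a b c d : Fin n, a < b ∧ b < c ∧ c < d ∧ Q = {a, b, c, d}
    · obtain ⟨a, b, c, d, h1, h2, h3, rfl⟩ := hQ
      set u0 : CIO n := ⟨(a, c), h1.trans h2⟩ with hu0
      set v0 : CIO n := ⟨(b, d), h2.trans h3⟩ with hv0
      have huv : ¬ u0 ≤ v0 := by
        rintro (hc | hc)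
        · have := congrArg (fun z => z.val.1) hc
          simp [hu0, hv0] at this
          exact absurd (this ▸ h1) (lt_irrefl _)
        · exact absurd hc (not_lt.mpr h2.le)
      have hvu : ¬ v0 ≤ u0 := by
        rintro (hc | hc)
        · have := congrArg (fun z => z.val.1) hc
          simp [hu0, hv0] at this
          exact absurd (this ▸ h1) (lt_irrefl _)
        · exact absurd hc (not_lt.mpr ((h1.trans (h2.trans h3)).le))
      obtain ⟨i, hi⟩ := hreal.2 u0 v0 huv hvu
      have hmem := (L i).mem_of_rel _ _ hi
      have hiu : i ∈ Su u0 := Finset.mem_filter.mpr ⟨Finset.mem_univ _, hmem.2⟩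
      have hiv : i ∈ Su v0 := Finset.mem_filter.mpr ⟨Finset.mem_univ _, hmem.1⟩
      have hbound : rk i u0 * s + rk i v0 < s * s := by
        have b1 := hrk_lt i u0 hiu
        have b2 := hrk_lt i v0 hiv
        calc rk i u0 * s + rk i v0 < rk i u0 * s + s := by omega
          _ = (rk i u0 + 1) * s := by ring
          _ ≤ s * s := Nat.mul_le_mul_right s b1
      refine ⟨⟨rk i u0 * s + rk i v0, hbound⟩, ?_⟩
      intro a' b' c' d' h1' h2' h3' hset u v hu hv
      obtain ⟨ea, eb, ec, ed⟩ := quad_eq h1 h2 h3 h1' h2' h3' hset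
      have hueq : u = u0 := by
        apply Subtype.ext
        rw [hu, hu0, ← ea, ← ec]
      have hveq : v = v0 := by
        apply Subtype.ext
        rw [hv, hv0, ← eb, ← ed]
      subst hueq; subst hveq
      exact ⟨i, hi, rfl⟩
    · refine ⟨⟨0, Nat.mul_pos hs hs⟩, ?_⟩
      intro a b c d h1 h2 h3 hQeq u v hu hv
      exact absurd ⟨a, b, c, d, h1, h2, h3, hQeq⟩ hQ
  choose φ hφ using key
  obtain ⟨H, hHcard, cc, hcc⟩ := hram φ
  set e := H.orderIsoOfFin hHcard with he
  set x : Fin 7 → Fin n := fun i => (e i : Fin n) with hx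
  have hxmono : ∀ {i j : Fin 7}, i < j → x i < x j := by
    intro i j hij
    exact (Subtype.coe_lt_coe).mpr (e.strictMono hij)
  have hxH : ∀ i, x i ∈ H := fun i => (e i).2
  have h01 : x 0 < x 1 := hxmono (by decide)
  have h12 : x 1 < x 2 := hxmono (by decide)
  have h13 : x 1 < x 3 := hxmono (by decide)
  have h23 : x 2 < x 3 := hxmono (by decide)
  have h35 : x 3 < x 5 := hxmono (by decide)
  have h02 : x 0 < x 2 := hxmono (by decide)
  have h36 : x 3 < x 6 := hxmono (by decide)
  have h25 : x 2 < x 5 := hxmono (by decide)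
  have h56 : x 5 < x 6 := hxmono (by decide)
  have h14 : x 1 < x 4 := hxmono (by decide)
  have h45 : x 4 < x 5 := hxmono (by decide)
  have h03 : x 0 < x 3 := hxmono (by decide)
  have h15 : x 1 < x 5 := hxmono (by decide)
  have h26 : x 2 < x 6 := hxmono (by decide)
  have h46 : x 4 < x 6 := hxmono (by decide)
  have h34 : x 3 < x 4 := hxmono (by decide)
  have h04 : x 0 < x 4 := hxmono (by decide)
  set J1 : CIO n := ⟨(x 0, x 3), h03⟩ with hJ1
  set J2 : CIO n := ⟨(x 1, x 5), h15⟩ with hJ2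
  set JX : CIO n := ⟨(x 2, x 6), h26⟩ with hJX
  set J3 : CIO n := ⟨(x 4, x 6), h46⟩ with hJ3
  have hsub1 : ({x 0, x 1, x 3, x 5} : Finset (Fin n)) ⊆ H := by
    simp [Finset.insert_subset_iff, hxH]
  have hsub2 : ({x 0, x 2, x 3, x 6} : Finset (Fin n)) ⊆ H := by
    simp [Finset.insert_subset_iff, hxH]
  have hsub3 : ({x 1, x 2, x 5, x 6} : Finset (Fin n)) ⊆ H := by
    simp [Finset.insert_subset_iff, hxH]
  have hsub4 : ({x 1, x 4, x 5, x 6} : Finset (Fin n)) ⊆ H := by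
    simp [Finset.insert_subset_iff, hxH]
  have hc1 := hcc _ hsub1 (quad_card h01 h13 h35)
  have hc2 := hcc _ hsub2 (quad_card h02 h23 h36)
  have hc3 := hcc _ hsub3 (quad_card h12 h25 h56)
  have hc4 := hcc _ hsub4 (quad_card h14 h45 h56)
  obtain ⟨i12, hr12, he12⟩ :=
    hφ {x 0, x 1, x 3, x 5} (x 0) (x 1) (x 3) (x 5) h01 h13 h35 rfl J1 J2 rfl rfl
  obtain ⟨i1X, hr1X, he1X⟩ :=
    hφ {x 0, x 2, x 3, x 6} (x 0) (x 2) (x 3) (x 6) h02 h23 h36 rfl J1 JX rfl rfl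
  obtain ⟨i2X, hr2X, he2X⟩ :=
    hφ {x 1, x 2, x 5, x 6} (x 1) (x 2) (x 5) (x 6) h12 h25 h56 rfl J2 JX rfl rfl
  obtain ⟨i23, hr23, he23⟩ :=
    hφ {x 1, x 4, x 5, x 6} (x 1) (x 4) (x 5) (x 6) h14 h45 h56 rfl J2 J3 rfl rfl
  rw [hc1] at he12
  rw [hc2] at he1X
  rw [hc3] at he2X
  rw [hc4] at he23
  -- memberships
  have hm12 := (L i12).mem_of_rel _ _ hr12
  have hm1X := (L i1X).mem_of_rel _ _ hr1X
  have hm2X := (L i2X).mem_of_rel _ _ hr2X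
  have hm23 := (L i23).mem_of_rel _ _ hr23
  have hi12u : i12 ∈ Su J1 := Finset.mem_filter.mpr ⟨Finset.mem_univ _, hm12.2⟩
  have hi12v : i12 ∈ Su J2 := Finset.mem_filter.mpr ⟨Finset.mem_univ _, hm12.1⟩
  have hi1Xu : i1X ∈ Su J1 := Finset.mem_filter.mpr ⟨Finset.mem_univ _, hm1X.2⟩
  have hi1Xv : i1X ∈ Su JX := Finset.mem_filter.mpr ⟨Finset.mem_univ _, hm1X.1⟩
  have hi2Xu : i2X ∈ Su J2 := Finset.mem_filter.mpr ⟨Finset.mem_univ _, hm2X.2⟩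
  have hi2Xv : i2X ∈ Su JX := Finset.mem_filter.mpr ⟨Finset.mem_univ _, hm2X.1⟩
  have hi23u : i23 ∈ Su J2 := Finset.mem_filter.mpr ⟨Finset.mem_univ _, hm23.2⟩
  have hi23v : i23 ∈ Su J3 := Finset.mem_filter.mpr ⟨Finset.mem_univ _, hm23.1⟩
  -- chain of equalities
  have e1 := enc_inj (hrk_lt _ _ hi12v) (hrk_lt _ _ hi1Xv) (he12.symm.trans he1X)
  have eq1 : i12 = i1X := hrk_inj J1 _ _ hi12u hi1Xu e1.1
  have e2 := enc_inj (hrk_lt _ _ hi1Xv) (hrk_lt _ _ hi2Xv) (he1X.symm.trans he2X)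
  have eq2 : i1X = i2X := hrk_inj JX _ _ hi1Xv hi2Xv e2.2
  have e3 := enc_inj (hrk_lt _ _ hi2Xv) (hrk_lt _ _ hi23v) (he2X.symm.trans he23)
  have eq3 : i2X = i23 := hrk_inj J2 _ _ hi2Xu hi23u e3.1
  have eqi : i12 = i23 := (eq1.trans eq2).trans eq3
  rw [eqi] at hr12
  -- transitivity gives a reversal of a comparable pair
  have hr31 : (L i23).r J3 J1 := (L i23).trans' _ _ _ hr23 hr12
  have hmem31 := (L i23).mem_of_rel _ _ hr31
  have hle : J1 ≤ J3 := Or.inr h34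
  have hr13 : (L i23).r J1 J3 := (L i23).extends_le _ hmem31.2 _ hmem31.1 hle
  have : J1 = J3 := (L i23).antisymm' _ _ hr13 hr31
  have := congrArg (fun z => z.val.1) this
  simp only [hJ1, hJ3] at this
  exact absurd (this ▸ h04) (lt_irrefl _)

end Aux

/-- For every `s ≥ 1`, if `n ≥ Ram(4,7;s²)` then `ldim I_n > s`. -/
theorem ldim_CIO_gt (s : ℕ) (hs : 1 ≤ s) (n : ℕ) (hn : Ram 4 7 (s * s) ≤ n) :
    s < ldim (CIO n) := by
  classical
  have hKne := ldim_set_nonempty (CIO n)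
  by_contra hcon
  push_neg at hcon
  have hmem : ldim (CIO n) ∈ {k | 0 < k ∧ ∃ (t : ℕ) (L : Fin t → PLE (CIO n)),
      IsLocalRealizer L ∧ ∀ u : CIO n, ({i | u ∈ (L i).S} : Set (Fin t)).ncard ≤ k} :=
    Nat.sInf_mem hKne
  obtain ⟨hpos, t, L, hreal, hb⟩ := hmem
  exact main_contra hs (ramseyProp_of_le hn) L hreal (fun u => le_trans (hb u) hcon)
end
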